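/- arXiv:2104.12740 — 5 statements merged into one kernel-verified Lean document; each statement's English description precedes it below -/
import Mathlib

section
/- Let S be a nonnegative discrete-time martingale and for k ∈ ℕ let τ̃_k := inf{j > k : S_j < S_{j-1}}. Then for each k, E[S_{τ̃_k}] = E[S_k] + lim_{n→∞} E[(S_∞ − S_n) 1_{{S_k ≤ S_{k+1} ≤ ⋯ ≤ S_n}}], where S_∞ is the a.s. limit of S and the limit on the right exists. -/
open MeasureTheory Filter Set

noncomputable section

variable {Ω : Type*}

/-- Evaluation of a discrete-time process at a possibly infinite random time `τ`,
using the limit variable `Sinf` on the event `{τ = ∞}`. -/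
def evalAt (S : ℕ → Ω → ℝ) (Sinf : Ω → ℝ) (τ : Ω → ℕ∞) (ω : Ω) : ℝ :=
  if τ ω = ⊤ then Sinf ω else S (τ ω).toNat ω

/-- The `k`-th drawdown time of `S`: `τ₀ = 0` and
`τ_k = inf {j > τ_{k-1} : S_j < S_{j-1}}` (with value `∞` if no such `j` exists). -/
def drawdown (S : ℕ → Ω → ℝ) : ℕ → Ω → ℕ∞
  | 0 => fun _ => 0
  | (k + 1) => fun ω =>
      sInf {j : ℕ∞ | drawdown S k ω < j ∧ ∃ n : ℕ, j = (n : ℕ∞) ∧ S n ω < S (n - 1) ω}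

/-- The first drawdown of `S` after the deterministic time `k`:
`τ̃_k = inf {j > k : S_j < S_{j-1}}`. -/
def drawdownAfter (S : ℕ → Ω → ℝ) (k : ℕ) (ω : Ω) : ℕ∞ :=
  sInf {j : ℕ∞ | (k : ℕ∞) < j ∧ ∃ n : ℕ, j = (n : ℕ∞) ∧ S n ω < S (n - 1) ω}

/-- The process stopped at a possibly infinite random time. -/
def stoppedAt (S : ℕ → Ω → ℝ) (τ : Ω → ℕ∞) (n : ℕ) (ω : Ω) : ℝ :=
  S ((min (n : ℕ∞) (τ ω)).toNat) ω

/-- The event `{S_k ≤ S_{k+1} ≤ ⋯ ≤ S_n}`. -/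
def monoEvent (S : ℕ → Ω → ℝ) (k n : ℕ) : Set Ω :=
  {ω | ∀ j, k ≤ j → j < n → S j ω ≤ S (j + 1) ω}

/-- `S` is a bubble under `P`: it loses mass at its `k`-th drawdown time for some `k ≥ 1`. -/
def IsBubble [MeasurableSpace Ω] (S : ℕ → Ω → ℝ) (Sinf : Ω → ℝ) (P : Measure Ω) : Prop :=
  ∃ k : ℕ, ∫ ω, evalAt S Sinf (drawdown S (k + 1)) ω ∂P < ∫ ω, S 0 ω ∂P

end

/-! The first drawdown after `k` is a stopping time: `n < τ̃_k` holds exactly on the event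
`S_k ≤ ⋯ ≤ S_n`. The stopped martingale `S^τ̃` has constant expectation `E[S_0] = E[S_k]` and
converges a.s. to `S_{τ̃_k}`, so by Fatou `S_{τ̃_k}` (like `S_∞`) is integrable. Since
`S_{τ̃_k} - S^τ̃_n = (S_{τ̃_k} - S_n) 1_{n < τ̃_k}`, the integral of `S_{τ̃_k} - S_n` over
`{n < τ̃_k}` equals `E[S_{τ̃_k}] - E[S_k]` for every `n`. What remains, the integral of
`S_∞ - S_{τ̃_k}` over the decreasing events `{n < τ̃_k}`, tends to its integral over
`{τ̃_k = ∞}`, where the integrand vanishes. -/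

theorem MeasureTheory.integrable_of_tendsto_of_integral_le {α : Type*} {m : MeasurableSpace α}
    {μ : Measure α} {f : ℕ → α → ℝ} {g : α → ℝ} {C : ℝ} (hf : ∀ n, Integrable (f n) μ)
    (hf_nonneg : ∀ n, 0 ≤ᵐ[μ] f n) (hC : ∀ n, ∫ a, f n a ∂μ ≤ C)
    (hlim : ∀ᵐ a ∂μ, Tendsto (fun n => f n a) atTop (nhds (g a))) : Integrable g μ := by
  have hbdd (n : ℕ) : eLpNorm (f n) 1 μ ≤ ENNReal.ofReal C := by
    rw [eLpNorm_one_eq_lintegral_enorm, ← ofReal_integral_norm_eq_lintegral_enorm (hf n),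
      integral_congr_ae ((hf_nonneg n).mono fun a ha => Real.norm_of_nonneg ha)]
    exact ENNReal.ofReal_le_ofReal (hC n)
  refine memLp_one_iff_integrable.1
    ⟨aestronglyMeasurable_of_tendsto_ae atTop (fun n => (hf n).1) hlim, ?_⟩
  calc eLpNorm g 1 μ ≤ atTop.liminf fun n => eLpNorm (f n) 1 μ :=
        Lp.eLpNorm_lim_le_liminf_eLpNorm (fun n => (hf n).1) g hlim
    _ ≤ ENNReal.ofReal C := liminf_le_of_frequently_le' (.of_forall hbdd)
    _ < ⊤ := ENNReal.ofReal_lt_top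

theorem ENat.toNat_eq_untopA {x : ℕ∞} (hx : x ≠ ⊤) : x.toNat = WithTop.untopA x := by
  lift x to ℕ using hx
  simp

section Drawdown

variable {Ω : Type*} {S : ℕ → Ω → ℝ} {k n : ℕ} {ω : Ω}

theorem lt_drawdownAfter_iff : (n : ℕ∞) < drawdownAfter S k ω ↔ ω ∈ monoEvent S k n := by
  rw [← ENat.add_one_le_iff (ENat.natCast_ne_top n), drawdownAfter, le_sInf_iff]
  simp only [monoEvent, mem_ofPred_eq]
  constructor
  · intro h j hkj hjn
    by_contra! hdrop
    have := h (j + 1 : ℕ)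
      ⟨by exact_mod_cast Nat.lt_succ_of_le hkj, j + 1, rfl, by simpa using hdrop⟩
    exact absurd (by exact_mod_cast this : n + 1 ≤ j + 1) (by omega)
  · rintro h _ ⟨hkm, m, rfl, hdrop⟩
    have hkm : k < m := by exact_mod_cast hkm
    by_contra! hmn
    have hmn : m < n + 1 := by exact_mod_cast hmn
    have := h (m - 1) (by omega) (by omega)
    rw [Nat.sub_add_cancel (by omega)] at this
    exact hdrop.not_ge this

theorem monoEvent_eq_setOf_lt_drawdownAfter :
    monoEvent S k n = {ω | (n : ℕ∞) < drawdownAfter S k ω} := by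
  ext; exact lt_drawdownAfter_iff.symm

end Drawdown

section StoppingTime

variable {Ω : Type*} {m0 : MeasurableSpace Ω} {ℱ : Filtration ℕ m0} {S : ℕ → Ω → ℝ}

theorem MeasureTheory.StronglyAdapted.measurableSet_monoEvent (hS : StronglyAdapted ℱ S)
    (k n : ℕ) : MeasurableSet[ℱ n] (monoEvent S k n) := by
  have hS_le {j : ℕ} (hj : j ≤ n) : Measurable[ℱ n] (S j) :=
    ((hS j).mono (ℱ.mono hj)).measurable
  have : monoEvent S k n = ⋂ j, ⋂ (_ : k ≤ j), ⋂ (_ : j < n), {ω | S j ω ≤ S (j + 1) ω} := by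
    ext; simp [monoEvent]
  rw [this]
  exact .iInter fun j => .iInter fun _ => .iInter fun hjn =>
    measurableSet_le (hS_le hjn.le) (hS_le hjn)

theorem MeasureTheory.StronglyAdapted.isStoppingTime_drawdownAfter (hS : StronglyAdapted ℱ S)
    (k : ℕ) : IsStoppingTime ℱ (drawdownAfter S k) := by
  intro n
  convert (hS.measurableSet_monoEvent k n).compl using 1
  ext ω; exact not_lt.symm.trans lt_drawdownAfter_iff.not

end StoppingTime

section StoppedAt

variable {Ω : Type*} {S : ℕ → Ω → ℝ} {Sinf : Ω → ℝ} {τ : Ω → ℕ∞} {ω : Ω}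

theorem stoppedAt_eq_stoppedProcess : stoppedAt S τ = stoppedProcess S τ := by
  ext n ω
  simp only [stoppedAt, stoppedProcess, ENat.some_eq_natCast]
  rw [ENat.toNat_eq_untopA (min_lt_of_left_lt (ENat.natCast_lt_top n)).ne]
  rfl

@[simp]
theorem stoppedAt_zero : stoppedAt S τ 0 = S 0 := by
  ext; simp [stoppedAt]

theorem tendsto_stoppedAt_evalAt (h : Tendsto (fun n => S n ω) atTop (nhds (Sinf ω))) :
    Tendsto (fun n => stoppedAt S τ n ω) atTop (nhds (evalAt S Sinf τ ω)) := by
  induction hτ : τ ω using ENat.recTopCoe with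
  | top => simpa [stoppedAt, evalAt, hτ] using h
  | coe m =>
    simp only [evalAt, hτ, ENat.natCast_ne_top, if_false, ENat.toNat_natCast]
    refine tendsto_const_nhds.congr' ?_
    filter_upwards [eventually_ge_atTop m] with n hn
    simp [stoppedAt, hτ, hn]

theorem evalAt_sub_stoppedAt (n : ℕ) :
    evalAt S Sinf τ ω - stoppedAt S τ n ω =
      {ω | (n : ℕ∞) < τ ω}.indicator (fun ω => evalAt S Sinf τ ω - S n ω) ω := by
  by_cases hn : (n : ℕ∞) < τ ω
  · simp [stoppedAt, hn, hn.le]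
  · induction hτ : τ ω using ENat.recTopCoe with
    | top => simp [hτ] at hn
    | coe m =>
      simp only [hτ, Nat.cast_lt, not_lt] at hn
      simp [stoppedAt, evalAt, hτ, hn]

theorem evalAt_eq_of_mem_iInter (h : ω ∈ ⋂ n : ℕ, {ω | (n : ℕ∞) < τ ω}) :
    evalAt S Sinf τ ω = Sinf ω := by
  rw [evalAt, if_pos (ENat.eq_top_iff_forall_gt.2 (mem_iInter.1 h))]

end StoppedAt

section Martingale

variable {Ω : Type*} {m0 : MeasurableSpace Ω} {μ : Measure Ω} {ℱ : Filtration ℕ m0}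
  {f : ℕ → Ω → ℝ} {τ : Ω → ℕ∞}

theorem MeasureTheory.Martingale.integral_eq [SigmaFiniteFiltration μ ℱ]
    (hf : Martingale f ℱ μ) {i j : ℕ} (hij : i ≤ j) : ∫ ω, f i ω ∂μ = ∫ ω, f j ω ∂μ := by
  simpa using hf.setIntegral_eq hij MeasurableSet.univ

theorem MeasureTheory.Martingale.stoppedAt [SigmaFiniteFiltration μ ℱ]
    (hf : Martingale f ℱ μ) (hτ : IsStoppingTime ℱ τ) : Martingale (stoppedAt f τ) ℱ μ := by
  rw [stoppedAt_eq_stoppedProcess]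
  refine martingale_iff.2 ⟨?_, hf.submartingale.stoppedProcess hτ⟩
  have := (hf.neg.submartingale.stoppedProcess hτ).neg
  rwa [stoppedProcess_neg (τ := τ), neg_neg] at this

end Martingale

section NonnegMartingale

variable {Ω : Type*} {m0 : MeasurableSpace Ω} {μ : Measure Ω} {ℱ : Filtration ℕ m0}
  [SigmaFiniteFiltration μ ℱ] {S : ℕ → Ω → ℝ} {Sinf : Ω → ℝ} {τ : Ω → ℕ∞}

theorem MeasureTheory.Martingale.integrable_of_tendsto (hS : Martingale S ℱ μ)
    (hnn : ∀ n, 0 ≤ᵐ[μ] S n) (hconv : ∀ᵐ ω ∂μ, Tendsto (fun n => S n ω) atTop (nhds (Sinf ω))) :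
    Integrable Sinf μ :=
  integrable_of_tendsto_of_integral_le hS.integrable hnn
    (fun n => (hS.integral_eq (Nat.zero_le n)).ge) hconv

theorem MeasureTheory.Martingale.tendsto_setIntegral_lt_stoppingTime (hS : Martingale S ℱ μ)
    (hnn : ∀ n ω, 0 ≤ S n ω) (hconv : ∀ᵐ ω ∂μ, Tendsto (fun n => S n ω) atTop (nhds (Sinf ω)))
    (hτ : IsStoppingTime ℱ τ) :
    Tendsto (fun n : ℕ => ∫ ω in {ω | (n : ℕ∞) < τ ω}, (Sinf ω - S n ω) ∂μ) atTop
      (nhds (∫ ω, evalAt S Sinf τ ω ∂μ - ∫ ω, S 0 ω ∂μ)) := by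
  have hSτ := hS.stoppedAt hτ
  have hSinf : Integrable Sinf μ := hS.integrable_of_tendsto (fun n => .of_forall (hnn n)) hconv
  have hE : Integrable (evalAt S Sinf τ) μ :=
    hSτ.integrable_of_tendsto (fun n => .of_forall fun ω => hnn _ ω)
      (hconv.mono fun ω => tendsto_stoppedAt_evalAt)
  have hA (n : ℕ) : MeasurableSet {ω | (n : ℕ∞) < τ ω} := ℱ.le n _ (hτ.measurableSet_gt n)
  have hgain (n : ℕ) : ∫ ω in {ω | (n : ℕ∞) < τ ω}, (evalAt S Sinf τ ω - S n ω) ∂μ =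
      ∫ ω, evalAt S Sinf τ ω ∂μ - ∫ ω, S 0 ω ∂μ := by
    rw [← integral_indicator (hA n),
      ← integral_congr_ae (.of_forall fun ω => evalAt_sub_stoppedAt n),
      integral_sub hE (hSτ.integrable n), ← hSτ.integral_eq (Nat.zero_le n), stoppedAt_zero]
  have hsplit (n : ℕ) : ∫ ω in {ω | (n : ℕ∞) < τ ω}, (Sinf ω - S n ω) ∂μ =
      (∫ ω, evalAt S Sinf τ ω ∂μ - ∫ ω, S 0 ω ∂μ) +
        ∫ ω in {ω | (n : ℕ∞) < τ ω}, (Sinf ω - evalAt S Sinf τ ω) ∂μ := by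
    rw [← hgain n, ← integral_add (f := fun ω => evalAt S Sinf τ ω - S n ω)
      (g := fun ω => Sinf ω - evalAt S Sinf τ ω) (hE.sub (hS.integrable n)).integrableOn
      (hSinf.sub hE).integrableOn]
    congr with ω
    ring
  have htail : Tendsto (fun n : ℕ => ∫ ω in {ω | (n : ℕ∞) < τ ω}, (Sinf ω - evalAt S Sinf τ ω) ∂μ)
      atTop (nhds 0) := by
    have hanti : Antitone fun n : ℕ => {ω | (n : ℕ∞) < τ ω} :=
      fun i j hij ω (hω : (j : ℕ∞) < τ ω) => lt_of_le_of_lt (by exact_mod_cast hij) hω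
    have := tendsto_setIntegral_of_antitone (f := fun ω => Sinf ω - evalAt S Sinf τ ω) hA hanti
      ⟨0, (hSinf.sub hE).integrableOn⟩
    rwa [setIntegral_eq_zero_of_forall_eq_zero
      fun ω hω => sub_eq_zero.2 (evalAt_eq_of_mem_iInter hω).symm] at this
  simpa [hsplit] using tendsto_const_nhds.add htail

end NonnegMartingale

/-- For a nonnegative martingale `S` and `τ̃_k = inf{j > k : S_j < S_{j-1}}`,
the limit `L = lim_n E[(S_∞ - S_n) 1_{{S_k ≤ ⋯ ≤ S_n}}]` exists and
`E[S_{τ̃_k}] = E[S_k] + L`. -/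
theorem expectation_at_drawdown_after
    {Ω : Type*} {m0 : MeasurableSpace Ω} {P : Measure Ω} [IsProbabilityMeasure P]
    {ℱ : Filtration ℕ m0} {S : ℕ → Ω → ℝ} (hmart : Martingale S ℱ P)
    (hnn : ∀ n ω, 0 ≤ S n ω) {Sinf : Ω → ℝ}
    (hconv : ∀ᵐ ω ∂P, Tendsto (fun n => S n ω) atTop (nhds (Sinf ω))) (k : ℕ) :
    ∃ L : ℝ,
      Tendsto
        (fun n => ∫ ω, (Sinf ω - S n ω) * (monoEvent S k n).indicator (fun _ => (1 : ℝ)) ω ∂P)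
        atTop (nhds L) ∧
      ∫ ω, evalAt S Sinf (drawdownAfter S k) ω ∂P = (∫ ω, S k ω ∂P) + L := by
  have hτ := hmart.stronglyAdapted.isStoppingTime_drawdownAfter k
  refine ⟨_, ?_, (add_sub_cancel _ _).symm⟩
  rw [← hmart.integral_eq (Nat.zero_le k)]
  convert hmart.tendsto_setIntegral_lt_stoppingTime hnn hconv hτ using 2 with n
  rw [← monoEvent_eq_setOf_lt_drawdownAfter,
    ← integral_indicator (ℱ.le n _ (hmart.stronglyAdapted.measurableSet_monoEvent k n))]
  congr with ω
  by_cases hω : ω ∈ monoEvent S k n <;> simp [hω]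
end

section
/- Let (X_k)_{k≥1} be independent nonnegative random variables with E[X_k] = 1, and let S_k := Π_{ℓ=1}^k X_ℓ. If Σ_{k=1}^∞ P(X_k < 1) < ∞, then S is a uniformly integrable martingale. -/
/-!
Both halves rest on the factorisation `S_j = S_i · ∏_{i ≤ ℓ < j} X_ℓ`, whose second factor is
independent of `σ(S_0, …, S_i) ≤ σ(X_ℓ : ℓ < i)` and has mean one; this gives the martingale
property. For uniform integrability, `S_n ≤ Q_n := ∏_{ℓ < n} max(X_ℓ, 1)`, which increases in `n`,
and `max(X, 1) ≤ X + 1_{X < 1}` gives `E[Q_n] ≤ ∏ (1 + P(X_ℓ < 1)) ≤ exp (∑ P(X_k < 1))`. By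
monotone convergence `sup_n Q_n` is integrable, and it dominates every `S_n`.
-/

open MeasureTheory Filter Set

open ProbabilityTheory
open scoped ENNReal

section Domination

variable {ι α β : Type*} {m : MeasurableSpace α} {μ : Measure α} [NormedAddCommGroup β]
  {p : ℝ≥0∞}

theorem uniformIntegrable_of_dominated {f : ι → α → β} {g : α → ℝ} (hp : 1 ≤ p) (hp' : p ≠ ∞)
    (hf : ∀ i, AEStronglyMeasurable (f i) μ) (hg : MemLp g p μ)
    (hfg : ∀ i, ∀ᵐ x ∂μ, ‖f i x‖ ≤ g x) : UniformIntegrable f p μ := by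
  refine ⟨hf, fun ε hε => ?_, (eLpNorm g p μ).toNNReal, fun i => ?_⟩
  · obtain ⟨δ, hδ, hgδ⟩ := unifIntegrable_const (ι := Unit) hp hp' hg hε
    refine ⟨δ, hδ, fun i s hs hμs => (eLpNorm_mono_ae_real ?_).trans (hgδ () s hs hμs)⟩
    filter_upwards [hfg i] with x hx
    by_cases hxs : x ∈ s <;> simp [hxs, hx]
  · rw [ENNReal.coe_toNNReal hg.eLpNorm_ne_top]
    exact eLpNorm_mono_ae_real (hfg i)

theorem exists_integrable_ge_of_monotone {Q : ℕ → α → ℝ} {C : ℝ}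
    (hQint : ∀ n, Integrable (Q n) μ) (hQ0 : ∀ n x, 0 ≤ Q n x) (hQmono : ∀ x, Monotone (Q · x))
    (hQC : ∀ n, ∫ x, Q n x ∂μ ≤ C) : ∃ g, Integrable g μ ∧ ∀ n, ∀ᵐ x ∂μ, Q n x ≤ g x := by
  set G : α → ℝ≥0∞ := fun x => ⨆ n, ENNReal.ofReal (Q n x)
  have hG : ∫⁻ x, G x ∂μ ≤ ENNReal.ofReal C := by
    rw [lintegral_iSup' (fun n => (hQint n).aemeasurable.ennreal_ofReal)
      (ae_of_all _ fun x _ _ hnk => ENNReal.ofReal_le_ofReal (hQmono x hnk))]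
    refine iSup_le fun n => ?_
    rw [← ofReal_integral_eq_lintegral_ofReal (hQint n) (ae_of_all _ (hQ0 n))]
    exact ENNReal.ofReal_le_ofReal (hQC n)
  have hGfin : ∫⁻ x, G x ∂μ ≠ ∞ := (hG.trans_lt ENNReal.ofReal_lt_top).ne
  have hGm : AEMeasurable G μ := .iSup fun n => (hQint n).aemeasurable.ennreal_ofReal
  refine ⟨fun x => (G x).toReal, integrable_toReal_of_lintegral_ne_top hGm hGfin, fun n => ?_⟩
  filter_upwards [ae_lt_top' hGm hGfin] with x hx
  exact (ENNReal.ofReal_le_iff_le_toReal hx.ne).1 (le_iSup (fun n => ENNReal.ofReal (Q n x)) n)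

end Domination

section IndependentProduct

variable {Ω ι : Type*} {m0 : MeasurableSpace Ω} {P : Measure Ω}

theorem ProbabilityTheory.iIndepFun.integrable_finsetProd {X : ι → Ω → ℝ}
    (hX : iIndepFun X P) (hXm : ∀ i, Measurable (X i)) (hXint : ∀ i, Integrable (X i) P)
    (s : Finset ι) : Integrable (fun ω => ∏ i ∈ s, X i ω) P := by
  have := hX.isProbabilityMeasure
  induction s using Finset.cons_induction with
  | empty => simp
  | cons j s hj ih =>
    simp only [Finset.prod_cons]
    have hindep := (hX.indepFun_finsetProd_of_notMem hXm hj).symm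
    simpa only [Pi.mul_def, Finset.prod_apply] using
      hindep.integrable_mul (hXint j) (by rwa [Finset.prod_fn])

theorem ProbabilityTheory.iIndepFun.integral_finsetProd {X : ι → Ω → ℝ}
    (hX : iIndepFun X P) (hXm : ∀ i, Measurable (X i)) (s : Finset ι) :
    ∫ ω, ∏ i ∈ s, X i ω ∂P = ∏ i ∈ s, ∫ ω, X i ω ∂P := by
  rw [← s.prod_coe_sort, ← (hX.precomp Subtype.val_injective).integral_fun_prod_eq_prod_integral
    fun i => (hXm _).aestronglyMeasurable]
  congr 1 with ω
  exact (s.prod_coe_sort fun i => X i ω).symm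

variable [IsProbabilityMeasure P] {X : ℕ → Ω → ℝ}

theorem martingale_prod_of_iIndepFun (hXm : ∀ k, Measurable (X k))
    (hXint : ∀ k, Integrable (X k) P) (hXmean : ∀ k, ∫ ω, X k ω ∂P = 1) (hX : iIndepFun X P)
    {S : ℕ → Ω → ℝ} (hS : ∀ k ω, S k ω = ∏ ℓ ∈ Finset.range k, X ℓ ω) {F : Filtration ℕ m0}
    (hSF : StronglyAdapted F S)
    (hF : ∀ k, F k ≤ ⨆ ℓ ∈ Iio k, MeasurableSpace.comap (X ℓ) inferInstance) :
    Martingale S F P := by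
  refine ⟨hSF, fun i j hij => ?_⟩
  set future := ⨆ ℓ ∈ Ici i, MeasurableSpace.comap (X ℓ) inferInstance
  set Y : Ω → ℝ := fun ω => ∏ ℓ ∈ Finset.Ico i j, X ℓ ω
  have hsplit : S j = S i * Y := by
    ext ω
    simp only [hS, Pi.mul_apply, Y, Finset.prod_range_mul_prod_Ico _ hij]
  have hYint : Integrable Y P := hX.integrable_finsetProd hXm hXint _
  have hYmean : ∫ ω, Y ω ∂P = 1 := by simp [Y, hX.integral_finsetProd hXm, hXmean]
  have hYfuture : StronglyMeasurable[future] Y := by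
    refine (Finset.measurable_prod _ fun ℓ hℓ => ?_).stronglyMeasurable
    exact (comap_measurable (X ℓ)).mono
      (le_iSup₂ (f := fun ℓ (_ : ℓ ∈ Ici i) => MeasurableSpace.comap (X ℓ) inferInstance) ℓ
        (Finset.mem_Ico.1 hℓ).1) le_rfl
  have hindep : Indep future (F i) P :=
    indep_of_indep_of_le_right (indep_iSup_of_disjoint (fun ℓ => (hXm ℓ).comap_le) hX.iIndep
      (Iio_disjoint_Ici le_rfl).symm) (hF i)
  have hcondY : P[Y | F i] =ᵐ[P] fun _ => 1 := by
    simpa only [hYmean] using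
      condExp_indep_eq (iSup₂_le fun ℓ _ => (hXm ℓ).comap_le) (F.le i) hYfuture hindep
  have hSYint : Integrable (S i * Y) P := by
    rw [← hsplit, funext (hS j)]
    exact hX.integrable_finsetProd hXm hXint _
  calc P[S j | F i] = P[S i * Y | F i] := by rw [hsplit]
    _ =ᵐ[P] S i * P[Y | F i] := condExp_mul_of_stronglyMeasurable_left (hSF i) hSYint hYint
    _ =ᵐ[P] S i := by filter_upwards [hcondY] with ω hω; simp [hω]

end IndependentProduct

section ProductMartingale

variable {Ω : Type*} {m0 : MeasurableSpace Ω} {P : Measure Ω} {X : ℕ → Ω → ℝ}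

theorem MeasureTheory.Filtration.natural_le_iSup_comap_Iio {S : ℕ → Ω → ℝ}
    (hS : ∀ k ω, S k ω = ∏ ℓ ∈ Finset.range k, X ℓ ω) (hSm : ∀ k, StronglyMeasurable (S k))
    (k : ℕ) :
    Filtration.natural S hSm k ≤ ⨆ ℓ ∈ Iio k, MeasurableSpace.comap (X ℓ) inferInstance := by
  refine iSup₂_le fun j hjk => Measurable.comap_le ?_
  rw [funext (hS j)]
  refine Finset.measurable_prod _ fun ℓ hℓ => (comap_measurable (X ℓ)).mono ?_ le_rfl
  exact le_iSup₂ (f := fun ℓ (_ : ℓ ∈ Iio k) => MeasurableSpace.comap (X ℓ) inferInstance) ℓ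
    ((Finset.mem_range.1 hℓ).trans_le hjk)

theorem integral_max_one_le [IsFiniteMeasure P] {Y : Ω → ℝ} (hYm : Measurable Y)
    (hY0 : ∀ ω, 0 ≤ Y ω) (hYint : Integrable Y P) :
    ∫ ω, max (Y ω) 1 ∂P ≤ ∫ ω, Y ω ∂P + P.real {ω | Y ω < 1} := by
  have hmeas : MeasurableSet {ω | Y ω < 1} := hYm measurableSet_Iio
  have hind : Integrable ({ω | Y ω < 1}.indicator (1 : Ω → ℝ)) P :=
    (integrable_const 1).indicator hmeas
  rw [← integral_indicator_one hmeas, ← integral_add hYint hind]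
  refine integral_mono (hYint.sup (integrable_const 1)) (hYint.add hind) fun ω => ?_
  by_cases h : Y ω < 1
  · simp [h, h.le, hY0 ω]
  · simp [h, not_lt.1 h]

theorem integral_prod_max_one_le_exp [IsProbabilityMeasure P] (hXm : ∀ k, Measurable (X k))
    (hX0 : ∀ k ω, 0 ≤ X k ω) (hXint : ∀ k, Integrable (X k) P)
    (hXmean : ∀ k, ∫ ω, X k ω ∂P = 1) (hX : iIndepFun X P)
    (hsum : Summable fun k => P.real {ω | X k ω < 1}) (n : ℕ) :
    ∫ ω, ∏ ℓ ∈ Finset.range n, max (X ℓ ω) 1 ∂P ≤ Real.exp (∑' k, P.real {ω | X k ω < 1}) := by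
  have hM : iIndepFun (fun k ω => max (X k ω) 1) P :=
    hX.comp (fun _ x => max x 1) fun _ => measurable_id.max measurable_const
  rw [hM.integral_finsetProd fun k => (hXm k).max measurable_const]
  calc ∏ ℓ ∈ Finset.range n, ∫ ω, max (X ℓ ω) 1 ∂P
      ≤ ∏ ℓ ∈ Finset.range n, (1 + P.real {ω | X ℓ ω < 1}) := by
        refine Finset.prod_le_prod (fun ℓ _ => integral_nonneg fun ω => ?_) fun ℓ _ => ?_
        · exact zero_le_one.trans (le_max_right _ _)
        · simpa only [hXmean] using integral_max_one_le (hXm ℓ) (hX0 ℓ) (hXint ℓ)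
    _ ≤ Real.exp (∑ ℓ ∈ Finset.range n, P.real {ω | X ℓ ω < 1}) :=
        Real.prod_one_add_le_exp_sum _ fun _ => measureReal_nonneg
    _ ≤ Real.exp (∑' k, P.real {ω | X k ω < 1}) :=
        Real.exp_le_exp.2 (hsum.sum_le_tsum _ fun _ _ => measureReal_nonneg)

end ProductMartingale

/-- If `(X_k)` are independent nonnegative with mean 1 and
`Σ_k P(X_k < 1) < ∞`, then the product martingale `S_k = Π_{ℓ<k} X_ℓ` is a uniformly
integrable martingale (w.r.t. its natural filtration). -/
theorem product_martingale_uniformIntegrable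
    {Ω : Type*} {m0 : MeasurableSpace Ω} {P : Measure Ω} [IsProbabilityMeasure P]
    (X : ℕ → Ω → ℝ) (hXmeas : ∀ k, StronglyMeasurable (X k))
    (hXnn : ∀ k ω, 0 ≤ X k ω) (hXint : ∀ k, Integrable (X k) P)
    (hXmean : ∀ k, ∫ ω, X k ω ∂P = 1)
    (hindep : ProbabilityTheory.iIndepFun X P)
    (S : ℕ → Ω → ℝ) (hSdef : ∀ k ω, S k ω = ∏ ℓ ∈ Finset.range k, X ℓ ω)
    (hSmeas : ∀ k, StronglyMeasurable (S k))
    (hsum : Summable (fun k => (P {ω | X k ω < 1}).toReal)) :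
    Martingale S (Filtration.natural S hSmeas) P ∧ UniformIntegrable S 1 P := by
  have hXm : ∀ k, Measurable (X k) := fun k => (hXmeas k).measurable
  set Q : ℕ → Ω → ℝ := fun n ω => ∏ ℓ ∈ Finset.range n, max (X ℓ ω) 1
  have hQ1 : ∀ n ω, 1 ≤ Q n ω := fun n ω => Finset.one_le_prod fun ℓ _ => le_max_right _ _
  have hQmono : ∀ ω, Monotone (Q · ω) := fun ω => monotone_nat_of_le_succ fun n => by
    simpa only [Q, Finset.prod_range_succ] using
      le_mul_of_one_le_right (zero_le_one.trans (hQ1 n ω)) (le_max_right (X n ω) 1)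
  have hSQ : ∀ n ω, ‖S n ω‖ ≤ Q n ω := fun n ω => by
    rw [hSdef, Real.norm_of_nonneg (Finset.prod_nonneg fun ℓ _ => hXnn ℓ ω)]
    exact Finset.prod_le_prod (fun ℓ _ => hXnn ℓ ω) fun ℓ _ => le_max_left _ _
  have hQint : ∀ n, Integrable (Q n) P := fun n =>
    (hindep.comp _ fun _ => measurable_id.max measurable_const).integrable_finsetProd
      (fun k => (hXm k).max measurable_const) (fun k => (hXint k).sup (integrable_const 1)) _
  obtain ⟨g, hg, hQg⟩ := exists_integrable_ge_of_monotone hQint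
    (fun n ω => zero_le_one.trans (hQ1 n ω)) hQmono
    (integral_prod_max_one_le_exp hXm hXnn hXint hXmean hindep hsum)
  refine ⟨martingale_prod_of_iIndepFun hXm hXint hXmean hindep hSdef
    (Filtration.stronglyAdapted_natural hSmeas)
    (Filtration.natural_le_iSup_comap_Iio hSdef hSmeas),
    uniformIntegrable_of_dominated le_rfl ENNReal.one_ne_top
      (fun n => (hSmeas n).aestronglyMeasurable) (memLp_one_iff_integrable.2 hg) fun n => ?_⟩
  filter_upwards [hQg n] with ω hω using (hSQ n ω).trans hω
end

section
/- Let S be a positive discrete-time Markov martingale with transition kernel K, and define b(x) := (1/x)∫_{[0,x)} y K(x,dy). If liminf_{x→∞} b(x) > 0, then S fails to be a bubble under P_x for every starting point x > 0. -/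
open MeasureTheory Filter Set

noncomputable section

open ProbabilityTheory

/-- A positive time-homogeneous Markov martingale on `(0, ∞)` with transition kernel `K`,
together with its family of laws `P x` (start at `x`) and the a.s. limit `Sinf`. -/
structure MarkovMartingale (Ω : Type*) [m0 : MeasurableSpace Ω] where
  P : ℝ → Measure Ω
  F : Filtration ℕ m0
  S : ℕ → Ω → ℝ
  Sinf : Ω → ℝ
  K : Kernel ℝ ℝ
  markov : IsMarkovKernel K
  prob : ∀ x, 0 < x → IsProbabilityMeasure (P x)
  pos : ∀ x, 0 < x → ∀ᵐ ω ∂P x, ∀ n, 0 < S n ω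
  start : ∀ x, 0 < x → ∀ᵐ ω ∂P x, S 0 ω = x
  mart : ∀ x, 0 < x → Martingale S F (P x)
  conv : ∀ x, 0 < x → ∀ᵐ ω ∂P x, Tendsto (fun n => S n ω) atTop (nhds (Sinf ω))
  kernel_pos : ∀ x, 0 < x → K x (Set.Iic 0) = 0
  kernel_int : ∀ x, 0 < x → Integrable id (K x)
  kernel_mart : ∀ x, 0 < x → ∫ y, y ∂(K x) = x
  step : ∀ x, 0 < x → ∀ n : ℕ, ∀ g : ℝ → ℝ, Measurable g → (∃ C, ∀ y, |g y| ≤ C) →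
    (P x)[fun ω => g (S (n + 1) ω) | F n] =ᵐ[P x] fun ω => ∫ y, g y ∂(K (S n ω))

namespace MarkovMartingale

variable {Ω : Type*} [MeasurableSpace Ω]

/-- The probability `a(x) = K(x, [0,x))` of a downward move from `x`. -/
def a (M : MarkovMartingale Ω) (x : ℝ) : ℝ := (M.K x (Set.Ico 0 x)).toReal

/-- The relative recovery `b(x) = (1/x) ∫_{[0,x)} y K(x,dy)` upon a downward move. -/
def b (M : MarkovMartingale Ω) (x : ℝ) : ℝ := (1 / x) * ∫ y in Set.Ico 0 x, y ∂(M.K x)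

/-- The relaxed relative recovery `b_ε(x) = (1/x) ∫_{[0,x(1+ε))} y K(x,dy)`. -/
def bEps (M : MarkovMartingale Ω) (ε x : ℝ) : ℝ :=
  (1 / x) * ∫ y in Set.Ico 0 (x * (1 + ε)), y ∂(M.K x)

/-- `S` is a bubble under `P_x`. -/
def Bubble (M : MarkovMartingale Ω) (x : ℝ) : Prop := IsBubble M.S M.Sinf (M.P x)

/-- `S` is `P_x`-a.s. bounded. -/
def Bounded (M : MarkovMartingale Ω) (x : ℝ) : Prop :=
  ∃ C : ℝ, ∀ᵐ ω ∂M.P x, ∀ n, M.S n ω ≤ C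

/-- The default function `M_S(x) = x - E_x[S_{τ₁}]`, the loss of mass at the first
drawdown. -/
def defaultFn (M : MarkovMartingale Ω) (x : ℝ) : ℝ :=
  x - ∫ ω, evalAt M.S M.Sinf (drawdown M.S 1) ω ∂(M.P x)

/-- The assumption that the downward-move probability `a` is locally bounded away from zero
above a level `xa`. -/
def ALowerBound (M : MarkovMartingale Ω) (xa : ℝ) : Prop :=
  0 < xa ∧ ∀ y, xa < y → ∃ c > (0 : ℝ), ∀ x ∈ Set.Icc xa y, c ≤ M.a x

end MarkovMartingale

end


/-!
Fix `x > 0`, a drawdown time `τ = τ_k`, and write `Y_n = S_{τ ∧ n}`. Optional stopping gives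
`E_x[Y_n] = x`, and Fatou's lemma makes `S_τ` integrable. Choose `R` with `b ≥ c > 0` on
`[R, ∞)`. Pointwise `Y_n ≤ min(Y_n, R + S_τ) + S_n 𝟙{n < τ, S_n ≥ R}`, and the first term converges
in `L¹` to `S_τ` by dominated convergence, so `x ≤ E_x[S_τ]` once `E_x[S_n; n < τ_k, S_n ≥ R] → 0`.
This follows by induction on `k`: on the `F_n`-event `{τ_k ≤ n < τ_{k+1}, S_n ≥ R}` a downward
move at time `n + 1` is exactly the drawdown `τ_{k+1} = n + 1`, and by the Markov property it
recovers on average `S_n b(S_n) ≥ c S_n`. Hence `c E_x[S_n; τ_k ≤ n < τ_{k+1}, S_n ≥ R]` is at most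
`E_x[S_{τ_{k+1}}; τ_{k+1} = n + 1]`, the `n`-th term of a convergent series.
-/

open Topology

namespace MeasureTheory

variable {Ω : Type*} {m0 : MeasurableSpace Ω} {μ : Measure Ω}

theorem Martingale.integral_stoppedValue_eq [IsFiniteMeasure μ] {𝒢 : Filtration ℕ m0}
    {f : ℕ → Ω → ℝ} (hf : Martingale f 𝒢 μ) {τ : Ω → ℕ∞} (hτ : IsStoppingTime 𝒢 τ) {N : ℕ}
    (hbdd : ∀ ω, τ ω ≤ N) : ∫ ω, stoppedValue f τ ω ∂μ = ∫ ω, f 0 ω ∂μ := by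
  have h0 := isStoppingTime_const 𝒢 0
  have hle : (fun _ ↦ ((0 : ℕ) : WithTop ℕ)) ≤ τ := fun _ ↦ bot_le
  have hsub := hf.submartingale.expected_stoppedValue_mono h0 hτ hle hbdd
  have hsuper := hf.neg.submartingale.expected_stoppedValue_mono h0 hτ hle hbdd
  rw [stoppedValue_const] at hsub hsuper
  simp only [stoppedValue, Pi.neg_apply, integral_neg, neg_le_neg_iff] at hsuper
  exact le_antisymm hsuper hsub

theorem integrable_of_tendsto_of_integral_le_s8 {f : ℕ → Ω → ℝ} {g : Ω → ℝ} {C : ℝ}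
    (hf : ∀ n, Integrable (f n) μ) (hf_nonneg : ∀ n, 0 ≤ᵐ[μ] f n)
    (hfg : ∀ᵐ ω ∂μ, Tendsto (fun n ↦ f n ω) atTop (𝓝 (g ω)))
    (hC : ∀ n, ∫ ω, f n ω ∂μ ≤ C) : Integrable g μ := by
  refine ⟨aestronglyMeasurable_of_tendsto_ae _ (fun n ↦ (hf n).1) hfg, ?_⟩
  have hfatou : ∫⁻ ω, ‖g ω‖ₑ ∂μ ≤ liminf (fun n ↦ ∫⁻ ω, ‖f n ω‖ₑ ∂μ) atTop :=
    lintegral_congr_ae (by filter_upwards [hfg] with ω hω using hω.enorm.liminf_eq) ▸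
      lintegral_liminf_le' fun n ↦ (hf n).1.aemeasurable.enorm
  have hbound (n : ℕ) : ∫⁻ ω, ‖f n ω‖ₑ ∂μ ≤ ENNReal.ofReal C := by
    rw [← ofReal_integral_norm_eq_lintegral_enorm (hf n),
      integral_congr_ae ((hf_nonneg n).mono fun ω h ↦ Real.norm_of_nonneg h)]
    exact ENNReal.ofReal_le_ofReal (hC n)
  exact hfatou.trans_lt <| (liminf_le_of_frequently_le' (Frequently.of_forall hbound)).trans_lt
    ENNReal.ofReal_lt_top

end MeasureTheory

section Drawdown

variable {Ω : Type*} {S : ℕ → Ω → ℝ} {k n : ℕ} {ω : Ω}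

lemma drawdown_succ_apply : drawdown S (k + 1) ω =
    sInf {j : ℕ∞ | drawdown S k ω < j ∧ ∃ n : ℕ, j = n ∧ S n ω < S (n - 1) ω} := rfl

lemma drawdown_succ_le_coe_iff :
    drawdown S (k + 1) ω ≤ n ↔ ∃ j ≤ n, drawdown S k ω < j ∧ S j ω < S (j - 1) ω := by
  rw [drawdown_succ_apply]
  constructor
  · intro h
    have hne : {j : ℕ∞ | drawdown S k ω < j ∧ ∃ n : ℕ, j = n ∧ S n ω < S (n - 1) ω}.Nonempty := by
      by_contra hne
      rw [not_nonempty_iff_eq_empty] at hne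
      simp [hne] at h
    obtain ⟨hlt, j, hj, hSj⟩ := csInf_mem hne
    refine ⟨j, ?_, hj ▸ hlt, hSj⟩
    exact_mod_cast hj ▸ h
  · rintro ⟨j, hjn, hlt, hSj⟩
    exact le_trans (sInf_le ⟨hlt, j, rfl, hSj⟩) (by exact_mod_cast hjn)

lemma drawdown_le_drawdown_succ : drawdown S k ω ≤ drawdown S (k + 1) ω :=
  drawdown_succ_apply ▸ le_sInf fun _ hj ↦ hj.1.le

lemma drawdown_succ_eq_of_lt (hk : drawdown S k ω ≤ n) (hn : n < drawdown S (k + 1) ω)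
    (hS : S (n + 1) ω < S n ω) : drawdown S (k + 1) ω = (n + 1 : ℕ) := by
  have hk' : drawdown S k ω < (n + 1 : ℕ) := lt_of_le_of_lt hk (by exact_mod_cast n.lt_succ_self)
  refine le_antisymm (drawdown_succ_apply ▸ sInf_le ⟨hk', n + 1, rfl, by simpa using hS⟩) ?_
  exact_mod_cast Order.add_one_le_of_lt hn

lemma isStoppingTime_drawdown {m0 : MeasurableSpace Ω} {F : Filtration ℕ m0}
    (hS : StronglyAdapted F S) (k : ℕ) : IsStoppingTime F (drawdown S k) := by
  induction k with
  | zero => exact isStoppingTime_const F 0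
  | succ k ih =>
    intro n
    change MeasurableSet[F n] {ω | drawdown S (k + 1) ω ≤ (n : ℕ∞)}
    have hset : {ω | drawdown S (k + 1) ω ≤ n} =
        ⋃ j ≤ n, {ω | drawdown S k ω < j} ∩ {ω | S j ω < S (j - 1) ω} := by
      ext ω
      simp only [mem_ofPred_eq, drawdown_succ_le_coe_iff, mem_iUnion, mem_inter_iff, exists_prop]
    rw [hset]
    refine MeasurableSet.biUnion (to_countable _) fun j (hj : j ≤ n) ↦ ?_
    exact (F.mono hj _ (ih.measurableSet_lt j)).inter <| measurableSet_lt
      ((hS j).measurable.mono (F.mono hj) le_rfl)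
      ((hS (j - 1)).measurable.mono (F.mono (by omega)) le_rfl)

end Drawdown

noncomputable def truncId (t y : ℝ) : ℝ := (Ico 0 t).indicator id y

lemma abs_truncId_le {t z : ℝ} (h : t ≤ z) (y : ℝ) : |truncId t y| ≤ |z| := by
  by_cases hy : y ∈ Ico 0 t
  · simpa [truncId, hy, abs_of_nonneg hy.1] using (hy.2.le.trans h).trans (le_abs_self z)
  · simp [truncId, hy]

lemma measurable_truncId : Measurable fun p : ℝ × ℝ ↦ truncId p.1 p.2 := by
  refine Measurable.ite ?_ measurable_snd measurable_const
  exact (measurableSet_le measurable_const measurable_snd).inter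
    (measurableSet_lt measurable_snd measurable_fst)

lemma measurable_truncId_left (t : ℝ) : Measurable (truncId t) :=
  measurable_truncId.comp (measurable_const.prodMk measurable_id)

lemma tendsto_truncId {t : ℕ → ℝ} {t₀ : ℝ} (ht : Tendsto t atTop (𝓝 t₀)) (hle : ∀ m, t m ≤ t₀)
    (y : ℝ) : Tendsto (fun m ↦ truncId (t m) y) atTop (𝓝 (truncId t₀ y)) := by
  by_cases hy : y ∈ Ico 0 t₀
  · refine tendsto_const_nhds.congr' ?_
    filter_upwards [ht.eventually (eventually_gt_nhds hy.2)] with m hm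
    simp [truncId, hy, hy.1, hm]
  · have hym (m : ℕ) : y ∉ Ico 0 (t m) := fun h ↦ hy ⟨h.1, h.2.trans_le (hle m)⟩
    simp [truncId, hy, hym]

noncomputable def gridFloor (m : ℕ) (z : ℝ) : ℝ := ⌊z * (m + 1)⌋ / (m + 1)

lemma gridFloor_le (m : ℕ) (z : ℝ) : gridFloor m z ≤ z := by
  rw [gridFloor, div_le_iff₀ (by positivity)]
  exact Int.floor_le _

lemma sub_lt_gridFloor (m : ℕ) (z : ℝ) : z - 1 / (m + 1) < gridFloor m z := by
  rw [gridFloor, lt_div_iff₀ (by positivity), sub_mul, one_div_mul_cancel (by positivity)]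
  exact Int.sub_one_lt_floor _

lemma tendsto_gridFloor (z : ℝ) : Tendsto (fun m ↦ gridFloor m z) atTop (𝓝 z) := by
  refine tendsto_of_tendsto_of_tendsto_of_le_of_le (g := fun m : ℕ ↦ z - 1 / ((m : ℝ) + 1))
    ?_ tendsto_const_nhds (fun m ↦ (sub_lt_gridFloor m z).le) (gridFloor_le · z)
  simpa using (tendsto_const_nhds (x := z)).sub tendsto_one_div_add_atTop_nhds_zero_nat

lemma measurable_gridFloor (m : ℕ) : Measurable (gridFloor m) :=
  (measurable_from_top.comp (Int.measurable_floor.comp (measurable_id.mul_const _))).div_const _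

lemma countable_range_gridFloor (m : ℕ) : (range (gridFloor m)).Countable :=
  (countable_range fun i : ℤ ↦ (i : ℝ) / (m + 1)).mono <| by rintro _ ⟨z, rfl⟩; exact ⟨_, rfl⟩

section EvalAt

variable {Ω : Type*} {S : ℕ → Ω → ℝ} {Sinf : Ω → ℝ} {τ : Ω → ℕ∞} {n : ℕ} {ω : Ω}

lemma evalAt_of_eq (h : τ ω = n) : evalAt S Sinf τ ω = S n ω := by
  simp [evalAt, h]

lemma stoppedProcess_eq_evalAt (h : τ ω ≤ n) : stoppedProcess S τ n ω = evalAt S Sinf τ ω := by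
  obtain ⟨m, hm⟩ := ENat.ne_top_iff_exists.1 (ne_top_of_le_ne_top (ENat.natCast_ne_top n) h)
  rw [stoppedProcess_eq_of_ge h, evalAt_of_eq hm.symm, ← hm]
  rfl

lemma tendsto_stoppedProcess_evalAt (hS : Tendsto (S · ω) atTop (𝓝 (Sinf ω))) :
    Tendsto (fun n ↦ stoppedProcess S τ n ω) atTop (𝓝 (evalAt S Sinf τ ω)) := by
  cases hτ : τ ω with
  | top =>
    rw [show evalAt S Sinf τ ω = Sinf ω by simp [evalAt, hτ]]
    exact hS.congr fun n ↦ (stoppedProcess_eq_of_le (hτ ▸ le_top)).symm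
  | coe m =>
    refine tendsto_const_nhds.congr' ?_
    filter_upwards [eventually_ge_atTop m] with n hn
    exact (stoppedProcess_eq_evalAt (hτ ▸ by exact_mod_cast hn)).symm

lemma stoppedProcess_le_min_add_indicator {R : ℝ} (hR : 0 ≤ R) (hSτ : 0 ≤ evalAt S Sinf τ ω) :
    stoppedProcess S τ n ω ≤ min (stoppedProcess S τ n ω) (R + evalAt S Sinf τ ω) +
      ({ω | n < τ ω} ∩ {ω | R ≤ S n ω}).indicator (S n) ω := by
  rcases le_or_gt (stoppedProcess S τ n ω) (R + evalAt S Sinf τ ω) with h | h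
  · rw [min_eq_left h, le_add_iff_nonneg_right]
    exact indicator_nonneg (fun ω hω ↦ hR.trans hω.2) ω
  · have hn : (n : ℕ∞) < τ ω := by
      by_contra! hle
      rw [stoppedProcess_eq_evalAt hle] at h
      linarith
    rw [stoppedProcess_eq_of_le hn.le] at h ⊢
    have hmem : ω ∈ {ω | n < τ ω} ∩ {ω | R ≤ S n ω} := ⟨hn, by simp only [mem_ofPred_eq]; linarith⟩
    rw [indicator_of_mem hmem, min_eq_right h.le]
    linarith

lemma truncId_le_indicator_drawdown_eq {k : ℕ} (hk : drawdown S k ω ≤ n)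
    (hn : n < drawdown S (k + 1) ω) (hSτ : 0 ≤ evalAt S Sinf (drawdown S (k + 1)) ω) :
    truncId (S n ω) (S (n + 1) ω) ≤ {ω | drawdown S (k + 1) ω = (n + 1 : ℕ)}.indicator
      (evalAt S Sinf (drawdown S (k + 1))) ω := by
  rw [truncId]
  by_cases hdown : S (n + 1) ω ∈ Ico 0 (S n ω)
  · have hτ : drawdown S (k + 1) ω = (n + 1 : ℕ) := drawdown_succ_eq_of_lt hk hn hdown.2
    have hmem : ω ∈ {ω | drawdown S (k + 1) ω = (n + 1 : ℕ)} := hτ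
    rw [indicator_of_mem hdown, indicator_of_mem hmem, evalAt_of_eq hτ, id]
  · rw [indicator_of_notMem hdown, indicator_apply]
    split_ifs
    exacts [hSτ, le_rfl]

end EvalAt

namespace MarkovMartingale

variable {Ω : Type*} [MeasurableSpace Ω] {M : MarkovMartingale Ω} {x c R : ℝ}

noncomputable def truncMean (M : MarkovMartingale Ω) (t z : ℝ) : ℝ := ∫ y, truncId t y ∂M.K z

lemma truncMean_self {z : ℝ} (hz : z ≠ 0) : M.truncMean z z = z * M.b z := by
  rw [truncMean, b, ← mul_assoc, mul_one_div_cancel hz, one_mul]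
  exact integral_indicator measurableSet_Ico

lemma abs_truncMean_le {t z' : ℝ} (h : t ≤ z') (z : ℝ) : |M.truncMean t z| ≤ |z'| := by
  have := M.markov
  simpa [truncMean] using norm_integral_le_of_norm_le_const (μ := M.K z)
    (Eventually.of_forall fun y ↦ (Real.norm_eq_abs _).trans_le (abs_truncId_le h y))

lemma measurable_truncMean_comp {φ : ℝ → ℝ} (hφ : Measurable φ) :
    Measurable fun z ↦ M.truncMean (φ z) z := by
  have := M.markov
  exact (measurable_truncId.comp ((hφ.comp measurable_fst).prodMk measurable_snd))
    |>.stronglyMeasurable.integral_kernel_prod_right' (κ := M.K) |>.measurable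

lemma tendsto_truncMean {t : ℕ → ℝ} {t₀ : ℝ} (ht : Tendsto t atTop (𝓝 t₀))
    (hle : ∀ m, t m ≤ t₀) (z : ℝ) :
    Tendsto (fun m ↦ M.truncMean (t m) z) atTop (𝓝 (M.truncMean t₀ z)) := by
  have := M.markov
  refine tendsto_integral_of_dominated_convergence (fun _ ↦ |t₀|)
    (fun _ ↦ (measurable_truncId_left _).aestronglyMeasurable)
    (integrable_const _) (fun m ↦ Eventually.of_forall (abs_truncId_le (hle m)))
    (Eventually.of_forall (tendsto_truncId ht hle))

lemma stronglyAdapted_S (M : MarkovMartingale Ω) : StronglyAdapted M.F M.S :=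
  (M.mart 1 one_pos).stronglyAdapted

lemma measurable_S (M : MarkovMartingale Ω) (n : ℕ) : Measurable (M.S n) :=
  ((M.stronglyAdapted_S n).mono (M.F.le n)).measurable

lemma integral_S_zero (hx : 0 < x) : ∫ ω, M.S 0 ω ∂M.P x = x := by
  have := M.prob x hx
  rw [integral_congr_ae (M.start x hx), integral_const, probReal_univ, one_smul]

section Step

variable {n : ℕ} {φ : ℝ → ℝ}

lemma integrable_truncId_comp (hx : 0 < x) (hφ : Measurable φ) (hφle : ∀ z, φ z ≤ z) :
    Integrable (fun ω ↦ truncId (φ (M.S n ω)) (M.S (n + 1) ω)) (M.P x) :=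
  ((M.mart x hx).integrable n).abs.mono'
    (measurable_truncId.comp ((hφ.comp (M.measurable_S n)).prodMk
      (M.measurable_S (n + 1)))).aestronglyMeasurable
    (Eventually.of_forall fun _ ↦ abs_truncId_le (hφle _) _)

lemma integrable_truncMean_comp (hx : 0 < x) (hφ : Measurable φ) (hφle : ∀ z, φ z ≤ z) :
    Integrable (fun ω ↦ M.truncMean (φ (M.S n ω)) (M.S n ω)) (M.P x) :=
  ((M.mart x hx).integrable n).abs.mono'
    ((measurable_truncMean_comp hφ).comp (M.measurable_S n)).aestronglyMeasurable
    (Eventually.of_forall fun _ ↦ abs_truncMean_le (hφle _) _)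

lemma setIntegral_truncId_succ (hx : 0 < x) (t : ℝ) {s : Set Ω}
    (hs : MeasurableSet[M.F n] s) :
    ∫ ω in s, truncId t (M.S (n + 1) ω) ∂M.P x = ∫ ω in s, M.truncMean t (M.S n ω) ∂M.P x := by
  have := M.prob x hx
  have hint : Integrable (fun ω ↦ truncId t (M.S (n + 1) ω)) (M.P x) :=
    .of_bound ((measurable_truncId_left t).comp (M.measurable_S _)).aestronglyMeasurable |t|
      (Eventually.of_forall fun _ ↦ abs_truncId_le le_rfl _)
  rw [← setIntegral_condExp (M.F.le n) hint hs]
  exact setIntegral_congr_ae (M.F.le n _ hs) ((M.step x hx n _ (measurable_truncId_left t)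
    ⟨|t|, abs_truncId_le le_rfl⟩).mono fun ω h _ ↦ h)

lemma setIntegral_truncId_comp_succ (hx : 0 < x) (hφ : Measurable φ)
    (hφ_range : (range φ).Countable) (hφle : ∀ z, φ z ≤ z) {s : Set Ω}
    (hs : MeasurableSet[M.F n] s) :
    ∫ ω in s, truncId (φ (M.S n ω)) (M.S (n + 1) ω) ∂M.P x =
      ∫ ω in s, M.truncMean (φ (M.S n ω)) (M.S n ω) ∂M.P x := by
  have := hφ_range.to_subtype
  let piece (t : range φ) : Set Ω := s ∩ {ω | φ (M.S n ω) = t}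
  have hpiece (t : range φ) : MeasurableSet[M.F n] (piece t) :=
    hs.inter ((hφ.comp ((M.stronglyAdapted_S n).measurable)) (measurableSet_singleton _))
  have hpiece' (t : range φ) : MeasurableSet (piece t) := M.F.le n _ (hpiece t)
  have hunion : ⋃ t, piece t = s := by
    ext ω
    simp [piece]
  have hdisj : Pairwise (Function.onFun Disjoint piece) := fun t t' htt' ↦
    disjoint_left.2 fun ω h h' ↦ htt' (Subtype.ext (h.2.symm.trans h'.2))
  rw [← hunion, integral_iUnion hpiece' hdisj (integrable_truncId_comp hx hφ hφle).integrableOn,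
    integral_iUnion hpiece' hdisj (integrable_truncMean_comp hx hφ hφle).integrableOn]
  refine tsum_congr fun t ↦ ?_
  calc ∫ ω in piece t, truncId (φ (M.S n ω)) (M.S (n + 1) ω) ∂M.P x
      = ∫ ω in piece t, truncId t (M.S (n + 1) ω) ∂M.P x :=
        setIntegral_congr_fun (hpiece' t) fun ω hω ↦ by rw [hω.2]
    _ = ∫ ω in piece t, M.truncMean t (M.S n ω) ∂M.P x := setIntegral_truncId_succ hx t (hpiece t)
    _ = ∫ ω in piece t, M.truncMean (φ (M.S n ω)) (M.S n ω) ∂M.P x :=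
        setIntegral_congr_fun (hpiece' t) fun ω hω ↦ by rw [hω.2]

/-- The kernel hypothesis `step` only covers fixed test functions, so the threshold `S_n` is first
rounded down to `ℤ / (m + 1)`, where it is constant on `F_n`-measurable pieces, and then `m → ∞`. -/
lemma setIntegral_truncId_self_succ (hx : 0 < x) {s : Set Ω} (hs : MeasurableSet[M.F n] s) :
    ∫ ω in s, truncId (M.S n ω) (M.S (n + 1) ω) ∂M.P x =
      ∫ ω in s, M.truncMean (M.S n ω) (M.S n ω) ∂M.P x := by
  have hbound := ((M.mart x hx).integrable n).abs.restrict (s := s)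
  have hlhs := tendsto_integral_of_dominated_convergence _
    (fun m ↦ (integrable_truncId_comp hx (measurable_gridFloor m) (gridFloor_le m)).restrict.1)
    hbound
    (fun m ↦ Eventually.of_forall fun ω ↦ abs_truncId_le (gridFloor_le m _) _)
    (Eventually.of_forall fun ω ↦ tendsto_truncId (tendsto_gridFloor _) (gridFloor_le · _) _)
  have hrhs := tendsto_integral_of_dominated_convergence _
    (fun m ↦ (integrable_truncMean_comp hx (measurable_gridFloor m) (gridFloor_le m)).restrict.1)
    hbound
    (fun m ↦ Eventually.of_forall fun ω ↦ abs_truncMean_le (gridFloor_le m _) _)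
    (Eventually.of_forall fun ω ↦ tendsto_truncMean (tendsto_gridFloor _) (gridFloor_le · _) _)
  simp_rw [setIntegral_truncId_comp_succ hx (measurable_gridFloor _) (countable_range_gridFloor _)
    (gridFloor_le _) hs] at hlhs
  exact tendsto_nhds_unique hlhs hrhs

end Step

lemma isStoppingTime_drawdown (M : MarkovMartingale Ω) (k : ℕ) :
    IsStoppingTime M.F (drawdown M.S k) :=
  _root_.isStoppingTime_drawdown M.stronglyAdapted_S k

lemma evalAt_nonneg (hx : 0 < x) (τ : Ω → ℕ∞) : ∀ᵐ ω ∂M.P x, 0 ≤ evalAt M.S M.Sinf τ ω := by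
  filter_upwards [M.pos x hx, M.conv x hx] with ω hpos hconv
  rw [evalAt]
  split
  · exact ge_of_tendsto' hconv fun n ↦ (hpos n).le
  · exact (hpos _).le

lemma integral_stoppedProcess_drawdown (hx : 0 < x) (k n : ℕ) :
    ∫ ω, stoppedProcess M.S (drawdown M.S k) n ω ∂M.P x = x := by
  have := M.prob x hx
  exact ((M.mart x hx).integral_stoppedValue_eq ((isStoppingTime_const _ n).min
    (M.isStoppingTime_drawdown k)) fun _ ↦ min_le_left _ _).trans (integral_S_zero hx)

lemma integrable_stoppedProcess_drawdown (hx : 0 < x) (k n : ℕ) :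
    Integrable (stoppedProcess M.S (drawdown M.S k) n) (M.P x) :=
  integrable_stoppedProcess (M.isStoppingTime_drawdown k) (M.mart x hx).integrable n

lemma integrable_evalAt_drawdown (hx : 0 < x) (k : ℕ) :
    Integrable (evalAt M.S M.Sinf (drawdown M.S k)) (M.P x) := by
  refine integrable_of_tendsto_of_integral_le_s8 (integrable_stoppedProcess_drawdown hx k)
    (fun n ↦ ?_) ?_ (fun n ↦ (integral_stoppedProcess_drawdown hx k n).le)
  · filter_upwards [M.pos x hx] with ω hpos using (hpos _).le
  · filter_upwards [M.conv x hx] with ω hconv using tendsto_stoppedProcess_evalAt hconv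

lemma tendsto_setIntegral_drawdown_eq (hx : 0 < x) (k : ℕ) :
    Tendsto (fun n ↦ ∫ ω in {ω | drawdown M.S k ω = (n + 1 : ℕ)},
      evalAt M.S M.Sinf (drawdown M.S k) ω ∂M.P x) atTop (𝓝 0) := by
  have hmeas (n : ℕ) : MeasurableSet {ω | drawdown M.S k ω = (n + 1 : ℕ)} :=
    M.F.le _ _ ((M.isStoppingTime_drawdown k).measurableSet_eq (n + 1))
  have hdisj :
      Pairwise (Function.onFun Disjoint fun n : ℕ ↦ {ω | drawdown M.S k ω = (n + 1 : ℕ)}) :=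
    fun i j hij ↦ disjoint_left.2 fun ω hi hj ↦ hij (by simpa using hi.symm.trans hj)
  exact (hasSum_integral_iUnion hmeas hdisj
    (integrable_evalAt_drawdown hx k).integrableOn).summable.tendsto_atTop_zero

lemma mul_setIntegral_le_setIntegral_drawdown_eq (hx : 0 < x) (hR : 0 < R)
    (hbR : ∀ z, R ≤ z → c ≤ M.b z) (k n : ℕ) :
    c * ∫ ω in {ω | drawdown M.S k ω ≤ n} ∩ {ω | n < drawdown M.S (k + 1) ω} ∩
        {ω | R ≤ M.S n ω}, M.S n ω ∂M.P x ≤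
      ∫ ω in {ω | drawdown M.S (k + 1) ω = (n + 1 : ℕ)},
        evalAt M.S M.Sinf (drawdown M.S (k + 1)) ω ∂M.P x := by
  set B := {ω | drawdown M.S k ω ≤ n} ∩ {ω | n < drawdown M.S (k + 1) ω} ∩ {ω | R ≤ M.S n ω}
  set T := {ω | drawdown M.S (k + 1) ω = (n + 1 : ℕ)}
  set Sτ := evalAt M.S M.Sinf (drawdown M.S (k + 1))
  have hBF : MeasurableSet[M.F n] B :=
    ((M.isStoppingTime_drawdown k n).inter
      ((M.isStoppingTime_drawdown (k + 1)).measurableSet_gt n)).inter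
      (measurableSet_le measurable_const (M.stronglyAdapted_S n).measurable)
  have hB : MeasurableSet B := M.F.le n _ hBF
  have hT : MeasurableSet T :=
    M.F.le _ _ ((M.isStoppingTime_drawdown (k + 1)).measurableSet_eq (n + 1))
  have hSτ := integrable_evalAt_drawdown hx (k + 1) (M := M)
  have hSτT : 0 ≤ᵐ[M.P x] T.indicator Sτ := by
    filter_upwards [evalAt_nonneg hx _] with ω hω using indicator_nonneg (fun ω _ ↦ hω) ω
  calc c * ∫ ω in B, M.S n ω ∂M.P x
      = ∫ ω in B, c * M.S n ω ∂M.P x := (integral_const_mul c _).symm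
    _ ≤ ∫ ω in B, M.truncMean (M.S n ω) (M.S n ω) ∂M.P x := by
      refine setIntegral_mono_on (((M.mart x hx).integrable n).const_mul c).integrableOn
        (integrable_truncMean_comp hx measurable_id le_refl).integrableOn hB fun ω hω ↦ ?_
      have hSn : 0 < M.S n ω := hR.trans_le hω.2
      rw [truncMean_self hSn.ne', mul_comm c]
      exact mul_le_mul_of_nonneg_left (hbR _ hω.2) hSn.le
    _ = ∫ ω in B, truncId (M.S n ω) (M.S (n + 1) ω) ∂M.P x :=
      (setIntegral_truncId_self_succ hx hBF).symm
    _ ≤ ∫ ω in B, T.indicator Sτ ω ∂M.P x := by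
      refine setIntegral_mono_on_ae (integrable_truncId_comp hx measurable_id le_refl).integrableOn
        (hSτ.indicator hT).integrableOn hB ?_
      filter_upwards [evalAt_nonneg hx _] with ω hSτω hωB
      exact truncId_le_indicator_drawdown_eq hωB.1.1 hωB.1.2 hSτω
    _ ≤ ∫ ω, T.indicator Sτ ω ∂M.P x := setIntegral_le_integral (hSτ.indicator hT) hSτT
    _ = ∫ ω in T, Sτ ω ∂M.P x := integral_indicator hT

lemma tendsto_setIntegral_lt_drawdown (hx : 0 < x) (hR : 0 < R) (hc : 0 < c)
    (hbR : ∀ z, R ≤ z → c ≤ M.b z) (k : ℕ) :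
    Tendsto (fun n : ℕ ↦ ∫ ω in {ω | n < drawdown M.S k ω} ∩ {ω | R ≤ M.S n ω}, M.S n ω ∂M.P x)
      atTop (𝓝 0) := by
  induction k with
  | zero => simp [drawdown]
  | succ k ih =>
    set B : ℕ → Set Ω := fun n ↦
      {ω | drawdown M.S k ω ≤ n} ∩ {ω | n < drawdown M.S (k + 1) ω} ∩ {ω | R ≤ M.S n ω}
    have hsplit (n : ℕ) : {ω | n < drawdown M.S (k + 1) ω} ∩ {ω | R ≤ M.S n ω} =
        B n ∪ {ω | n < drawdown M.S k ω} ∩ {ω | R ≤ M.S n ω} := by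
      ext ω
      simp only [B, mem_union, mem_inter_iff, mem_ofPred_eq]
      have := drawdown_le_drawdown_succ (S := M.S) (k := k) (ω := ω)
      constructor
      · rintro ⟨hlt, hR⟩
        rcases le_or_gt (drawdown M.S k ω) n with h | h
        exacts [Or.inl ⟨⟨h, hlt⟩, hR⟩, Or.inr ⟨h, hR⟩]
      · rintro (⟨⟨-, hlt⟩, hR⟩ | ⟨hlt, hR⟩)
        exacts [⟨hlt, hR⟩, ⟨hlt.trans_le this, hR⟩]
    have hEm (n : ℕ) : MeasurableSet ({ω | n < drawdown M.S k ω} ∩ {ω | R ≤ M.S n ω}) :=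
      (M.F.le n _ ((M.isStoppingTime_drawdown k).measurableSet_gt n)).inter
        (measurableSet_le measurable_const (M.measurable_S n))
    have hBm (n : ℕ) : MeasurableSet (B n) :=
      ((M.F.le n _ (M.isStoppingTime_drawdown k n)).inter
        (M.F.le n _ ((M.isStoppingTime_drawdown (k + 1)).measurableSet_gt n))).inter
        (measurableSet_le measurable_const (M.measurable_S n))
    have hdisj (n : ℕ) : Disjoint (B n) ({ω | n < drawdown M.S k ω} ∩ {ω | R ≤ M.S n ω}) :=
      disjoint_left.2 fun ω ⟨⟨hle, _⟩, _⟩ ⟨hlt, _⟩ ↦ not_le.2 (mem_ofPred.1 hlt) (mem_ofPred.1 hle)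
    have hB0 : Tendsto (fun n ↦ ∫ ω in B n, M.S n ω ∂M.P x) atTop (𝓝 0) := by
      refine squeeze_zero (fun n ↦ setIntegral_nonneg_ae (hBm n)
        ((M.pos x hx).mono fun ω h _ ↦ (h n).le)) (fun n ↦ ?_)
        (by simpa using (tendsto_setIntegral_drawdown_eq (M := M) hx (k + 1)).div_const c)
      rw [le_div_iff₀ hc, mul_comm]
      exact mul_setIntegral_le_setIntegral_drawdown_eq hx hR hbR k n
    have hsum := hB0.add ih
    rw [add_zero] at hsum
    refine hsum.congr fun n ↦ ?_
    rw [hsplit n, setIntegral_union (hdisj n) (hEm n) ((M.mart x hx).integrable n).integrableOn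
      ((M.mart x hx).integrable n).integrableOn]

lemma tendsto_integral_min_stoppedProcess_drawdown (hx : 0 < x) (hR : 0 ≤ R) (k : ℕ) :
    Tendsto (fun n ↦ ∫ ω, min (stoppedProcess M.S (drawdown M.S k) n ω)
      (R + evalAt M.S M.Sinf (drawdown M.S k) ω) ∂M.P x) atTop
      (𝓝 (∫ ω, evalAt M.S M.Sinf (drawdown M.S k) ω ∂M.P x)) := by
  have := M.prob x hx
  have hSτ := integrable_evalAt_drawdown (M := M) hx k
  refine tendsto_integral_of_dominated_convergence (fun ω ↦ R + evalAt M.S M.Sinf _ ω)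
    (fun n ↦ (integrable_stoppedProcess_drawdown hx k n).1.inf
      (aestronglyMeasurable_const.add hSτ.1)) ((integrable_const R).add hSτ) (fun n ↦ ?_) ?_
  · filter_upwards [M.pos x hx, evalAt_nonneg hx (drawdown M.S k)] with ω hpos hSτω
    have hY : 0 ≤ stoppedProcess M.S (drawdown M.S k) n ω := (hpos _).le
    rw [Real.norm_eq_abs, abs_le]
    exact ⟨le_min (by linarith) (by linarith), min_le_right _ _⟩
  · filter_upwards [M.conv x hx, evalAt_nonneg hx (drawdown M.S k)] with ω hconv hSτω
    have hmin := (tendsto_stoppedProcess_evalAt (τ := drawdown M.S k) hconv).min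
      (tendsto_const_nhds (x := R + evalAt M.S M.Sinf (drawdown M.S k) ω))
    rwa [min_eq_left (by linarith)] at hmin

lemma le_integral_evalAt_drawdown (hx : 0 < x) (hb : ∃ c > (0 : ℝ), ∀ᶠ z in atTop, c ≤ M.b z)
    (k : ℕ) : x ≤ ∫ ω, evalAt M.S M.Sinf (drawdown M.S k) ω ∂M.P x := by
  have := M.prob x hx
  obtain ⟨c, hc, hcb⟩ := hb
  obtain ⟨R, hR, hbR⟩ : ∃ R > (0 : ℝ), ∀ z, R ≤ z → c ≤ M.b z := by
    obtain ⟨R₀, h⟩ := eventually_atTop.1 hcb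
    exact ⟨max R₀ 1, by positivity, fun z hz ↦ h z ((le_max_left _ _).trans hz)⟩
  set Sτ := evalAt M.S M.Sinf (drawdown M.S k)
  set Y := stoppedProcess M.S (drawdown M.S k)
  set E : ℕ → Set Ω := fun n ↦ {ω | n < drawdown M.S k ω} ∩ {ω | R ≤ M.S n ω}
  have hSτ : Integrable Sτ (M.P x) := integrable_evalAt_drawdown hx k
  have hY_le (n : ℕ) :
      Y n ≤ᵐ[M.P x] fun ω ↦ min (Y n ω) (R + Sτ ω) + (E n).indicator (M.S n) ω := by
    filter_upwards [evalAt_nonneg hx (drawdown M.S k)] with ω hSτω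
    exact stoppedProcess_le_min_add_indicator hR.le hSτω
  have hE (n : ℕ) : MeasurableSet (E n) :=
    (M.F.le n _ ((M.isStoppingTime_drawdown k).measurableSet_gt n)).inter
      (measurableSet_le measurable_const (M.measurable_S n))
  have hlim := tendsto_integral_min_stoppedProcess_drawdown (M := M) hx hR.le k
  have hsum := hlim.add (tendsto_setIntegral_lt_drawdown hx hR hc hbR k)
  rw [add_zero] at hsum
  refine ge_of_tendsto' hsum fun n ↦ ?_
  have hmin : Integrable (fun ω ↦ min (Y n ω) (R + Sτ ω)) (M.P x) :=
    (integrable_stoppedProcess_drawdown hx k n).inf ((integrable_const R).add hSτ)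
  have hind : Integrable ((E n).indicator (M.S n)) (M.P x) :=
    ((M.mart x hx).integrable n).indicator (hE n)
  calc x = ∫ ω, Y n ω ∂M.P x := (integral_stoppedProcess_drawdown hx k n).symm
    _ ≤ ∫ ω, min (Y n ω) (R + Sτ ω) + (E n).indicator (M.S n) ω ∂M.P x :=
      integral_mono_ae (integrable_stoppedProcess_drawdown hx k n) (hmin.add hind) (hY_le n)
    _ = _ := by rw [integral_add hmin hind, integral_indicator (hE n)]

end MarkovMartingale

/-- If `liminf_{x→∞} b(x) > 0`, then `S` is not a bubble under `P_x` for any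
starting point `x > 0`. -/
theorem MarkovMartingale.not_bubble_of_liminf_b_pos
    {Ω : Type*} [MeasurableSpace Ω] (M : MarkovMartingale Ω)
    (hb : ∃ c > (0 : ℝ), ∀ᶠ x in atTop, c ≤ M.b x) :
    ∀ x : ℝ, 0 < x → ¬ M.Bubble x := by
  rintro x hx ⟨k, hk⟩
  rw [integral_S_zero hx] at hk
  exact (le_integral_evalAt_drawdown hx hb (k + 1)).not_gt hk
end

section
/- On the kernel K(x,dy) with density k(x,y) = (e/2)·((1−e^{−x})/(1−e^{−y}))·(1/x)·e^{−y/x} for y ≥ x > 0 (completed below the diagonal so that K is a martingale kernel), the function M(x) = x(1 − e^{−x}) solves M(x) = ∫_x^∞ M(y) k(x,y) dy for all x > 0, and more generally M_λ(x) = λx(1 − e^{−x}) is a solution for every λ ∈ [0,1]; moreover ∫_x^∞ k(x,y)dy < 1/2 for all x > 0, so a(x) = K(x,[0,x)) ≥ 1/2. -/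
/-!
Multiplying `M(y) = y (1 - e^{-y})` by `k(x, y)` cancels the denominator `1 - e^{-y}`, so the
Volterra integral is `(e/2) ((1 - e^{-x}) / x) ∫_x^∞ y e^{-y/x} dy` and the Gamma-type integral
`∫_x^∞ y e^{-y/x} dy = 2x²/e` returns `M(x)`. For `y > x` the ratio `(1 - e^{-x}) / (1 - e^{-y})`
is `< 1`, so `k(x, y) < (e / 2x) e^{-y/x}`, whose integral over `(x, ∞)` is exactly `1/2`.
-/

open MeasureTheory Filter Set

noncomputable section

def exKernelDensity (x y : ℝ) : ℝ :=
  (Real.exp 1 / 2) * ((1 - Real.exp (-x)) / (1 - Real.exp (-y))) * (1 / x) * Real.exp (-y / x)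

open Real Topology

theorem setIntegral_lt_setIntegral_of_forall_lt {X : Type*} [MeasurableSpace X] {μ : Measure X}
    {s : Set X} {f g : X → ℝ} (hs : MeasurableSet s) (hμs : μ s ≠ 0) (hf : IntegrableOn f s μ)
    (hg : IntegrableOn g s μ) (hlt : ∀ y ∈ s, f y < g y) :
    ∫ y in s, f y ∂μ < ∫ y in s, g y ∂μ := by
  rw [← sub_pos, ← integral_sub hg hf]
  have hsupport : Function.support (fun y => g y - f y) ∩ s = s :=
    inter_eq_right.2 fun y hy => sub_ne_zero.2 (hlt y hy).ne'
  rw [setIntegral_pos_iff_support_of_nonneg_ae (f := fun y => g y - f y) _ (hg.sub hf),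
    hsupport]
  · exact pos_iff_ne_zero.2 hμs
  · filter_upwards [ae_restrict_mem hs] with y hy using sub_nonneg.2 (hlt y hy).le

theorem integrableOn_exp_neg_div_Ioi (a : ℝ) {c : ℝ} (hc : 0 < c) :
    IntegrableOn (fun y => exp (-y / c)) (Ioi a) := by
  convert integrableOn_exp_mul_Ioi (neg_neg_of_pos (inv_pos.2 hc)) a using 3 with y
  ring

theorem integral_exp_neg_div_Ioi (a : ℝ) {c : ℝ} (hc : 0 < c) :
    ∫ y in Ioi a, exp (-y / c) = c * exp (-a / c) := by
  have h := integral_exp_mul_Ioi (neg_neg_of_pos (inv_pos.2 hc)) a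
  simp only [neg_mul, ← neg_div, ← div_eq_inv_mul] at h
  rw [h]
  field_simp

theorem tendsto_add_mul_exp_neg_div_atTop {c : ℝ} (hc : 0 < c) :
    Tendsto (fun y => (y + c) * exp (-y / c)) atTop (𝓝 0) := by
  have hlim : Tendsto (fun t => c * (t ^ 1 * exp (-t)) + c * exp (-t)) atTop (𝓝 0) := by
    simpa using ((tendsto_pow_mul_exp_neg_atTop_nhds_zero 1).const_mul c).add
      (tendsto_exp_neg_atTop_nhds_zero.const_mul c)
  refine (hlim.comp (tendsto_id.atTop_div_const hc)).congr fun y => ?_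
  simp only [Function.comp_apply, id, pow_one, neg_div]
  field_simp

/-- The antiderivative of `y e^{-y/c}` is `-c (y + c) e^{-y/c}`. -/
theorem integral_mul_exp_neg_div_Ioi {a c : ℝ} (ha : 0 ≤ a) (hc : 0 < c) :
    ∫ y in Ioi a, y * exp (-y / c) = c * (a + c) * exp (-a / c) := by
  have hderiv : ∀ y ∈ Ici a,
      HasDerivAt (fun y => -c * ((y + c) * exp (-y / c))) (y * exp (-y / c)) y := by
    intro y _
    have hexp : HasDerivAt (fun y => exp (-y / c)) (exp (-y / c) * (-1 / c)) y :=
      (hasDerivAt_exp _).comp y (by simpa using (hasDerivAt_id y).neg.div_const c)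
    refine ((((hasDerivAt_id' y).add_const c).mul hexp).const_mul (-c)).congr_deriv ?_
    field_simp
    ring
  have hnonneg : ∀ y ∈ Ioi a, 0 ≤ y * exp (-y / c) :=
    fun y hy => mul_nonneg (ha.trans (le_of_lt hy)) (exp_pos _).le
  have hlim := (tendsto_add_mul_exp_neg_div_atTop hc).const_mul (-c)
  rw [mul_zero] at hlim
  rw [integral_Ioi_of_hasDerivAt_of_nonneg' hderiv hnonneg hlim]
  ring

section exKernelDensity

variable {x y : ℝ}

theorem one_sub_exp_neg_pos (hy : 0 < y) : 0 < 1 - exp (-y) :=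
  sub_pos.2 (exp_lt_one_iff.2 (neg_neg_of_pos hy))

theorem exKernelDensity_pos (hx : 0 < x) (hy : 0 < y) : 0 < exKernelDensity x y := by
  have hx' := one_sub_exp_neg_pos hx
  have hy' := one_sub_exp_neg_pos hy
  unfold exKernelDensity
  positivity

theorem mul_one_sub_exp_neg_mul_exKernelDensity (hy : 0 < y) :
    y * (1 - exp (-y)) * exKernelDensity x y =
      exp 1 / 2 * (1 - exp (-x)) / x * (y * exp (-y / x)) := by
  have hy' := (one_sub_exp_neg_pos hy).ne'
  unfold exKernelDensity
  field_simp

theorem exKernelDensity_lt (hx : 0 < x) (hxy : x < y) :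
    exKernelDensity x y < exp 1 / 2 / x * exp (-y / x) := by
  have hy' := one_sub_exp_neg_pos (hx.trans hxy)
  have hratio : (1 - exp (-x)) / (1 - exp (-y)) < 1 :=
    (div_lt_one hy').2 (by linarith [exp_lt_exp.2 (neg_lt_neg hxy)])
  calc exKernelDensity x y
      = (1 - exp (-x)) / (1 - exp (-y)) * (exp 1 / 2 / x * exp (-y / x)) := by
        unfold exKernelDensity
        ring
    _ < exp 1 / 2 / x * exp (-y / x) :=
        mul_lt_of_lt_one_left (by positivity) hratio

theorem continuousOn_exKernelDensity (x : ℝ) : ContinuousOn (exKernelDensity x) (Ioi 0) := by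
  have hden : ∀ y ∈ Ioi (0 : ℝ), 1 - exp (-y) ≠ 0 :=
    fun y hy => (one_sub_exp_neg_pos hy).ne'
  unfold exKernelDensity
  fun_prop (disch := assumption)

theorem integrableOn_exKernelDensity (hx : 0 < x) : IntegrableOn (exKernelDensity x) (Ioi x) := by
  refine ((integrableOn_exp_neg_div_Ioi x hx).const_mul (exp 1 / 2 / x)).mono' ?_ ?_
  · exact ((continuousOn_exKernelDensity x).mono (Ioi_subset_Ioi hx.le)).aestronglyMeasurable
      measurableSet_Ioi
  · filter_upwards [ae_restrict_mem measurableSet_Ioi] with y hy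
    rw [Real.norm_of_nonneg (exKernelDensity_pos hx (hx.trans hy)).le]
    exact (exKernelDensity_lt hx hy).le

theorem setIntegral_mul_exKernelDensity (hx : 0 < x) (lam : ℝ) :
    ∫ y in Ici x, lam * y * (1 - exp (-y)) * exKernelDensity x y = lam * x * (1 - exp (-x)) := by
  have hintegrand : ∀ y ∈ Ioi x, lam * y * (1 - exp (-y)) * exKernelDensity x y =
      lam * (exp 1 / 2 * (1 - exp (-x)) / x) * (y * exp (-y / x)) := by
    intro y hy
    linear_combination lam * mul_one_sub_exp_neg_mul_exKernelDensity (x := x) (hx.trans hy)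
  rw [integral_Ici_eq_integral_Ioi, setIntegral_congr_fun measurableSet_Ioi hintegrand,
    integral_const_mul, integral_mul_exp_neg_div_Ioi hx.le hx, neg_div, div_self hx.ne', exp_neg 1]
  field_simp
  ring

theorem setIntegral_exKernelDensity_lt_half (hx : 0 < x) :
    ∫ y in Ici x, exKernelDensity x y < 1 / 2 := by
  calc ∫ y in Ici x, exKernelDensity x y
      = ∫ y in Ioi x, exKernelDensity x y := integral_Ici_eq_integral_Ioi
    _ < ∫ y in Ioi x, exp 1 / 2 / x * exp (-y / x) :=
        setIntegral_lt_setIntegral_of_forall_lt measurableSet_Ioi (by simp)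
          (integrableOn_exKernelDensity hx)
          ((integrableOn_exp_neg_div_Ioi x hx).const_mul _) fun y hy => exKernelDensity_lt hx hy
    _ = 1 / 2 := by
        rw [integral_const_mul, integral_exp_neg_div_Ioi x hx, neg_div, div_self hx.ne', exp_neg 1]
        field_simp

end exKernelDensity

/-- For the density `k(x,y)` above, every function
`M_λ(x) = λ·x·(1 - e^{-x})`, `λ ∈ [0,1]`, solves the Volterra equation
`M(x) = ∫_x^∞ M(y) k(x,y) dy` for all `x > 0`; moreover `∫_x^∞ k(x,y) dy < 1/2`,
so the downward-move probability satisfies `a(x) ≥ 1/2`. -/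
theorem exKernelDensity_volterra_solutions :
    ∀ x : ℝ, 0 < x →
      (∀ lam ∈ Set.Icc (0 : ℝ) 1,
        lam * x * (1 - Real.exp (-x)) =
          ∫ y in Set.Ici x, lam * y * (1 - Real.exp (-y)) * exKernelDensity x y) ∧
      (∫ y in Set.Ici x, exKernelDensity x y) < 1 / 2 := fun _ hx =>
  ⟨fun lam _ => (setIntegral_mul_exKernelDensity hx lam).symm,
    setIntegral_exKernelDensity_lt_half hx⟩

end
end

section
/- Let (M_t)_{t≥0} be a positive continuous local martingale whose paths a.s. never become eventually constant (P(M_t = M_∞ for all t ≥ s) = 0 for every s ≥ 0). Then there exists an increasing sequence (a_k)_{k∈ℕ} of nonnegative reals tending to infinity such that for every k, P(M_{a_k} ≥ M_{a_{k+1}} ≥ M_{a_{k+2}} ≥ ⋯) = 0. -/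
/-!
A continuous martingale cannot fall by `δ` on `[s, t]` while staying below `X s`. Sample it on the
level-`m` dyadic grid of `[s, t]` and stop at the first rise of `ε` above `X s`: optional sampling
gives `(ε + δ) P(no rise, fall by δ) ≤ ε + E[overshoot]`. The stopped values are conditional
expectations of `X t`, hence uniformly integrable, and by continuity the overshoot tends to `0`
a.s., so `P(no rise, fall by δ) ≤ ε / (ε + δ)` for every `ε`. Localising, a path of `M` that is
nonincreasing on `[N, ∞)` is a.s. constant there, which has probability zero by assumption.

The event that `M` is nonincreasing on the level-`j` dyadic grid of `[n, n + 1]` decreases, as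
`j → ∞`, to the event that it is nonincreasing on `[n, n + 1]` (by continuity). Choosing levels
`j n` with exceptional probability below `2⁻ⁿ`, Borel–Cantelli shows that a.s. monotonicity on the
grid of level `j n` forces monotonicity on `[n, n + 1]` for all large `n`. The sequence `a` runs
through these grids, block after block; if `M` is nonincreasing along `a` from some index on, it
is then nonincreasing on some `[N, ∞)`.
-/

open MeasureTheory Filter Set Topology
open scoped ENNReal

theorem Continuous.antitoneOn_of_subset_closure {α β : Type*} [TopologicalSpace α] [LinearOrder α]
    [OrderClosedTopology α] [TopologicalSpace β] [Preorder β] [OrderClosedTopology β] {f : α → β}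
    (hf : Continuous f) {S T : Set α} (hS : AntitoneOn f S) (hT : T ⊆ closure S) :
    AntitoneOn f T := by
  intro x hx y hy hxy
  rcases hxy.eq_or_lt with rfl | hlt
  · exact le_rfl
  have hmem : (x, y) ∈ closure {p : α × α | p.1 < p.2 ∧ p ∈ S ×ˢ S} :=
    (isOpen_lt continuous_fst continuous_snd).inter_closure ⟨hlt, by
      rw [closure_prod_eq]; exact ⟨hT hx, hT hy⟩⟩
  exact closure_minimal (fun p hp => hS hp.2.1 hp.2.2 hp.1.le)
    (isClosed_le (hf.comp continuous_snd) (hf.comp continuous_fst)) hmem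

theorem antitoneOn_Ici_of_forall_Icc_add_one {α : Type*} [Preorder α] {f : ℝ → α} {N : ℕ}
    (hf : ∀ n ≥ N, AntitoneOn f (Icc n (n + 1))) : AntitoneOn f (Ici (N : ℝ)) := by
  have hIcc (k : ℕ) : AntitoneOn f (Icc N (N + k : ℕ)) := by
    induction k with
    | zero => simp [antitoneOn_singleton]
    | succ k ih =>
      rw [← Icc_union_Icc_eq_Icc (a := (N : ℝ)) (b := (N + k : ℕ)) (by simp) (by simp)]
      exact ih.union_right (by simpa [add_assoc] using hf (N + k) (by omega))
        (isGreatest_Icc (by simp)) (isLeast_Icc (by simp))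
  intro x hx y hy hxy
  obtain ⟨k, hk⟩ := exists_nat_ge (y - N)
  exact hIcc k ⟨hx, by push_cast; linarith⟩ ⟨hy, by push_cast; linarith⟩ hxy

theorem exists_strictMono_concat {α : Type*} [Preorder α] {c : ℕ → ℕ} (hc : ∀ n, 0 < c n)
    {x : ℕ → ℕ → α} (hx : ∀ n, ∀ r < c n, x n r < x n (r + 1))
    (hglue : ∀ n, x n (c n) = x (n + 1) 0) :
    ∃ a : ℕ → α, StrictMono a ∧ ∀ n, ∀ r ≤ c n, a (∑ m ∈ Finset.range n, c m + r) = x n r := by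
  classical
  set K := fun n => ∑ m ∈ Finset.range n, c m
  have hK n : K (n + 1) = K n + c n := Finset.sum_range_succ _ _
  have hK_ge n : n ≤ K n := by
    induction n with
    | zero => exact le_rfl
    | succ n ih => have := hc n; rw [hK]; omega
  have hK_mono : Monotone K := monotone_nat_of_le_succ fun n => by rw [hK]; omega
  have hex i : ∃ n, i < K (n + 1) := ⟨i, by have := hK_ge (i + 1); omega⟩
  set blk := fun i => Nat.find (hex i)
  have hblk_eq n r (hr : r < c n) : blk (K n + r) = n := by
    refine (Nat.find_eq_iff _).2 ⟨by rw [hK]; omega, fun p hp => ?_⟩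
    have := hK_mono (show p + 1 ≤ n from hp)
    omega
  set a := fun i => x (blk i) (i - K (blk i))
  have hval n r (hr : r ≤ c n) : a (K n + r) = x n r := by
    rcases hr.lt_or_eq with hr | rfl
    · simp only [a, hblk_eq n r hr, Nat.add_sub_cancel_left]
    · have h := hblk_eq (n + 1) 0 (hc (n + 1))
      rw [add_zero, hK] at h
      simp only [a, h, hK, Nat.sub_self, hglue]
  have hdecomp i : ∃ n r, r < c n ∧ i = K n + r := by
    have h₁ : K (blk i) ≤ i := by
      rcases h : blk i with _ | p
      · exact Nat.zero_le i
      · have := Nat.find_min (hex i) (h ▸ Nat.lt_succ_self p : p < blk i)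
        omega
    have h₂ : i < K (blk i + 1) := Nat.find_spec (hex i)
    rw [hK] at h₂
    exact ⟨blk i, i - K (blk i), by omega, by omega⟩
  refine ⟨a, strictMono_nat_of_lt_succ fun i => ?_, hval⟩
  obtain ⟨n, r, hr, rfl⟩ := hdecomp i
  rw [add_assoc, hval n r hr.le, hval n (r + 1) hr]
  exact hx n r hr

noncomputable def gridTime (s t : ℝ) (m i : ℕ) : ℝ := s + i * ((t - s) / 2 ^ m)

section gridTime

variable {s t : ℝ} {m i : ℕ}

@[simp] theorem gridTime_zero : gridTime s t m 0 = s := by simp [gridTime]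

@[simp] theorem gridTime_two_pow : gridTime s t m (2 ^ m) = t := by
  simp only [gridTime, Nat.cast_pow, Nat.cast_ofNat]
  field_simp
  ring

theorem gridTime_succ_sub : gridTime s t m (i + 1) - gridTime s t m i = (t - s) / 2 ^ m := by
  simp only [gridTime, Nat.cast_succ]
  ring

theorem monotone_gridTime (hst : s ≤ t) : Monotone (gridTime s t m) := fun i j hij => by
  have : 0 ≤ (t - s) / 2 ^ m := by have := sub_nonneg.2 hst; positivity
  simp only [gridTime]
  gcongr

theorem strictMono_gridTime (hst : s < t) : StrictMono (gridTime s t m) := fun i j hij => by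
  have : 0 < (t - s) / 2 ^ m := by have := sub_pos.2 hst; positivity
  simp only [gridTime]
  gcongr

theorem gridTime_mem_Icc (hst : s ≤ t) (hi : i ≤ 2 ^ m) : gridTime s t m i ∈ Icc s t :=
  ⟨by simpa using monotone_gridTime (m := m) hst i.zero_le,
    by simpa using monotone_gridTime (m := m) hst hi⟩

theorem gridTime_two_mul : gridTime s t (m + 1) (2 * i) = gridTime s t m i := by
  simp only [gridTime, pow_succ]
  push_cast
  field_simp

theorem monotone_gridTime_image_Iic : Monotone fun m => gridTime s t m '' Iic (2 ^ m) := by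
  refine monotone_nat_of_le_succ fun m => ?_
  rintro _ ⟨i, hi, rfl⟩
  exact ⟨2 * i, by rw [mem_Iic, pow_succ]; rw [mem_Iic] at hi; omega, gridTime_two_mul⟩

theorem Icc_subset_closure_iUnion_gridTime (hst : s < t) :
    Icc s t ⊆ closure (⋃ m, gridTime s t m '' Iic (2 ^ m)) := by
  rintro x ⟨hsx, hxt⟩
  have hh m : 0 < (t - s) / 2 ^ m := by have := sub_pos.2 hst; positivity
  set i := fun m => ⌊(x - s) / ((t - s) / 2 ^ m)⌋₊
  have hi m : i m ≤ 2 ^ m := Nat.floor_le_of_le (by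
    rw [div_le_iff₀ (hh m)]
    field_simp
    push_cast
    nlinarith [pow_pos (two_pos : (0:ℝ) < 2) m])
  have hclose m : dist (gridTime s t m (i m)) x ≤ (t - s) / 2 ^ m := by
    have h1 := Nat.floor_le (div_nonneg (sub_nonneg.2 hsx) (hh m).le)
    have h2 := Nat.lt_floor_add_one ((x - s) / ((t - s) / 2 ^ m))
    rw [le_div_iff₀ (hh m)] at h1
    rw [div_lt_iff₀ (hh m)] at h2
    rw [Real.dist_eq, abs_le]
    simp only [gridTime, i]
    constructor <;> linarith
  have hmesh : Tendsto (fun m : ℕ => (t - s) / 2 ^ m) atTop (𝓝 0) :=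
    tendsto_const_nhds.div_atTop (tendsto_pow_atTop_atTop_of_one_lt one_lt_two)
  refine mem_closure_of_tendsto ((tendsto_iff_dist_tendsto_zero).2
    (squeeze_zero (fun _ => dist_nonneg) hclose hmesh))
    (Eventually.of_forall fun m => mem_iUnion.2 ⟨m, i m, hi m, rfl⟩)

theorem Continuous.antitoneOn_Icc_of_gridTime {α : Type*} [Preorder α] [TopologicalSpace α]
    [OrderClosedTopology α] {f : ℝ → α} (hf : Continuous f) (hst : s < t)
    (h : ∀ m, AntitoneOn f (gridTime s t m '' Iic (2 ^ m))) : AntitoneOn f (Icc s t) := by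
  refine hf.antitoneOn_of_subset_closure (fun x hx y hy hxy => ?_)
    (Icc_subset_closure_iUnion_gridTime hst)
  obtain ⟨m₁, hx⟩ := mem_iUnion.1 hx
  obtain ⟨m₂, hy⟩ := mem_iUnion.1 hy
  exact h (max m₁ m₂) (monotone_gridTime_image_Iic (le_max_left _ _) hx)
    (monotone_gridTime_image_Iic (le_max_right _ _) hy) hxy

theorem ContinuousOn.eventually_gridTime_succ_sub_le {f : ℝ → ℝ} (hf : ContinuousOn f (Icc s t))
    (hst : s ≤ t) {η : ℝ} (hη : 0 < η) :
    ∀ᶠ m in atTop, ∀ i < 2 ^ m, f (gridTime s t m (i + 1)) - f (gridTime s t m i) ≤ η := by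
  obtain ⟨δ, hδ, hfδ⟩ := Metric.uniformContinuousOn_iff.1
    (isCompact_Icc.uniformContinuousOn_of_continuous hf) η hη
  have hmesh : Tendsto (fun m : ℕ => (t - s) / 2 ^ m) atTop (𝓝 0) :=
    tendsto_const_nhds.div_atTop (tendsto_pow_atTop_atTop_of_one_lt one_lt_two)
  filter_upwards [hmesh.eventually (gt_mem_nhds hδ)] with m hm i hi
  have hdist := hfδ _ (gridTime_mem_Icc hst hi) _ (gridTime_mem_Icc hst hi.le) (by
    rw [Real.dist_eq, gridTime_succ_sub, abs_of_nonneg (by have := sub_nonneg.2 hst; positivity)]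
    exact hm)
  rw [Real.dist_eq] at hdist
  exact (le_abs_self _).trans hdist.le

end gridTime

theorem MeasureTheory.UnifIntegrable.of_norm_le {ι α β : Type*} {_ : MeasurableSpace α}
    {μ : Measure α} [NormedAddCommGroup β] {p : ℝ≥0∞} {f g : ι → α → β}
    (hf : UnifIntegrable f p μ) (hgf : ∀ i x, ‖g i x‖ ≤ ‖f i x‖) : UnifIntegrable g p μ := by
  intro ε hε
  obtain ⟨δ, hδ, h⟩ := hf hε
  refine ⟨δ, hδ, fun i s hs hμs => (eLpNorm_mono fun x => ?_).trans (h i s hs hμs)⟩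
  by_cases hx : x ∈ s <;> simp [hx, hgf]

theorem measurableSet_setOf_antitoneOn {Ω ι : Type*} {_ : MeasurableSpace Ω} [Preorder ι]
    {M : ι → Ω → ℝ} (hM : ∀ v, Measurable (M v)) {S : Set ι} (hS : S.Countable) :
    MeasurableSet {ω | AntitoneOn (M · ω) S} := by
  simp only [AntitoneOn, ofPred_forall]
  exact MeasurableSet.biInter hS fun x _ => MeasurableSet.biInter hS fun y _ =>
    MeasurableSet.iInter fun _ => measurableSet_le (hM y) (hM x)

theorem exists_ae_eventually_of_forall_mem_iInter {Ω : Type*} {_ : MeasurableSpace Ω}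
    {μ : Measure Ω} [IsFiniteMeasure μ] {D : ℕ → ℕ → Set Ω} {T : ℕ → Set Ω}
    (hD : ∀ n j, MeasurableSet (D n j)) (hanti : ∀ n, Antitone (D n))
    (hT : ∀ᵐ ω ∂μ, ∀ n, (∀ j, ω ∈ D n j) → ω ∈ T n) :
    ∃ j : ℕ → ℕ, ∀ᵐ ω ∂μ, ∀ᶠ n in atTop, ω ∈ D n (j n) → ω ∈ T n := by
  have hsmall n : ∃ j, μ (D n j \ ⋂ j', D n j') < 2⁻¹ ^ n := by
    have hlim := tendsto_measure_iInter_atTop (fun j => (hD n j).nullMeasurableSet) (hanti n)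
      ⟨0, measure_ne_top μ _⟩
    obtain ⟨j, hj⟩ := (hlim.eventually_lt_const (ENNReal.lt_add_right (measure_ne_top μ _)
      (pow_ne_zero n (ENNReal.inv_ne_zero.2 ENNReal.ofNat_ne_top) : (2⁻¹ : ℝ≥0∞) ^ n ≠ 0))).exists
    exact ⟨j, measure_sdiff_lt_of_lt_add (MeasurableSet.iInter (hD n)).nullMeasurableSet
      (iInter_subset _ j) (measure_ne_top μ _) hj⟩
  choose j hj using hsmall
  have hsum : ∑' n, μ (D n (j n) \ ⋂ j', D n j') ≠ ∞ :=
    ne_top_of_le_ne_top (by simp [ENNReal.tsum_geometric])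
      (ENNReal.tsum_le_tsum fun n => (hj n).le)
  refine ⟨j, ?_⟩
  filter_upwards [hT, ae_eventually_notMem hsum] with ω hT hBC
  filter_upwards [hBC] with n hn hD
  exact hT n fun j' => by_contra fun h => hn ⟨hD, fun h' => h (mem_iInter.1 h' j')⟩

namespace MeasureTheory

variable {Ω : Type*} {m0 : MeasurableSpace Ω} {μ : Measure Ω}

def Filtration.comp {ι κ : Type*} [Preorder ι] [Preorder κ] (ℱ : Filtration ι m0) {g : κ → ι}
    (hg : Monotone g) : Filtration κ m0 :=
  ⟨fun k => ℱ (g k), fun _ _ hkl => ℱ.mono (hg hkl), fun k => ℱ.le (g k)⟩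

theorem Martingale.comp {ι κ E : Type*} [Preorder ι] [Preorder κ] [NormedAddCommGroup E]
    [NormedSpace ℝ E] [CompleteSpace E] {ℱ : Filtration ι m0} {X : ι → Ω → E}
    (hX : Martingale X ℱ μ) {g : κ → ι} (hg : Monotone g) :
    Martingale (fun k => X (g k)) (ℱ.comp hg) μ :=
  ⟨fun k => hX.stronglyAdapted (g k), fun _ _ hkl => hX.condExp_ae_eq (hg hkl)⟩

noncomputable def firstRise (Y : ℕ → Ω → ℝ) (ε : ℝ) (n : ℕ) (ω : Ω) : WithTop ℕ :=
  (hittingBtwn (fun i ω => Y i ω - Y 0 ω) (Ici ε) 0 n ω : ℕ)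

noncomputable def riseOvershoot (Y : ℕ → Ω → ℝ) (ε : ℝ) (n : ℕ) (ω : Ω) : ℝ :=
  (stoppedValue Y (firstRise Y ε n) ω - (Y 0 ω + ε))⁺

variable {Y : ℕ → Ω → ℝ} {ε : ℝ} {n : ℕ} {ω : Ω}

theorem firstRise_le (Y : ℕ → Ω → ℝ) (ε : ℝ) (n : ℕ) (ω : Ω) : firstRise Y ε n ω ≤ n :=
  WithTop.coe_le_coe.2 (hittingBtwn_le ω)

theorem stoppedValue_firstRise :
    stoppedValue Y (firstRise Y ε n) ω =
      Y (hittingBtwn (fun i ω => Y i ω - Y 0 ω) (Ici ε) 0 n ω) ω :=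
  rfl

theorem stoppedValue_firstRise_of_forall_lt (h : ∀ i ≤ n, Y i ω - Y 0 ω < ε) :
    stoppedValue Y (firstRise Y ε n) ω = Y n ω := by
  have : hittingBtwn (fun i ω => Y i ω - Y 0 ω) (Ici ε) 0 n ω = n := by
    rw [hittingBtwn, if_neg]
    rintro ⟨i, hi, hrise⟩
    exact (h i hi.2).not_ge hrise
  rw [stoppedValue_firstRise, this]

theorem stoppedValue_firstRise_le {η : ℝ} (hε : 0 ≤ ε) (hη : 0 ≤ η)
    (hinc : ∀ i < n, Y (i + 1) ω - Y i ω ≤ η) :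
    stoppedValue Y (firstRise Y ε n) ω ≤ Y 0 ω + ε + η := by
  rcases hj : hittingBtwn (fun i ω => Y i ω - Y 0 ω) (Ici ε) 0 n ω with _ | i
  · rw [stoppedValue_firstRise, hj]
    linarith
  · have hin : i + 1 ≤ n := hj ▸ hittingBtwn_le ω
    have hbefore : Y i ω - Y 0 ω ∉ Ici ε :=
      notMem_of_lt_hittingBtwn (u := fun i ω => Y i ω - Y 0 ω) (m := n) (by omega) i.zero_le
    rw [stoppedValue_firstRise, hj]
    have := hinc i hin
    simp only [mem_Ici, not_le] at hbefore
    linarith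

theorem Adapted.isStoppingTime_firstRise {𝒢 : Filtration ℕ m0} (hY : Adapted 𝒢 Y) (ε : ℝ) (n : ℕ) :
    IsStoppingTime 𝒢 (firstRise Y ε n) :=
  Adapted.isStoppingTime_hittingBtwn
    (fun i => (hY i).sub ((hY 0).mono (𝒢.mono i.zero_le) le_rfl)) measurableSet_Ici

variable [IsFiniteMeasure μ] {𝒢 : Filtration ℕ m0}

theorem Martingale.stoppedValue_firstRise_ae_eq_condExp (hY : Martingale Y 𝒢 μ) (ε : ℝ)
    (n : ℕ) :
    stoppedValue Y (firstRise Y ε n) =ᵐ[μ]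
      μ[Y n | (hY.stronglyAdapted.adapted.isStoppingTime_firstRise ε n).measurableSpace] :=
  hY.stoppedValue_ae_eq_condExp_of_le_const _ (firstRise_le Y ε n)

theorem Martingale.measureReal_noRise_and_fall_le (hY : Martingale Y 𝒢 μ) (ε δ : ℝ) (n : ℕ) :
    (ε + δ) * μ.real {ω | (∀ i ≤ n, Y i ω - Y 0 ω < ε) ∧ Y n ω ≤ Y 0 ω - δ} ≤
      ε * μ.real univ + ∫ ω, riseOvershoot Y ε n ω ∂μ := by
  simp only [riseOvershoot]
  set Z := stoppedValue Y (firstRise Y ε n)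
  set E := {ω | (∀ i ≤ n, Y i ω - Y 0 ω < ε) ∧ Y n ω ≤ Y 0 ω - δ}
  have hmeas i : Measurable (Y i) := ((hY.stronglyAdapted i).mono (𝒢.le i)).measurable
  have hE : MeasurableSet E := by
    simp only [E, ofPred_and, ofPred_forall]
    exact (MeasurableSet.iInter fun i => MeasurableSet.iInter fun _ =>
      measurableSet_lt ((hmeas i).sub (hmeas 0)) measurable_const).inter
        (measurableSet_le (hmeas n) ((hmeas 0).sub_const δ))
  have hZ : Integrable Z μ :=
    integrable_condExp.congr (hY.stoppedValue_firstRise_ae_eq_condExp ε n).symm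
  have hc : Integrable (fun ω => Y 0 ω + ε) μ := (hY.integrable 0).add (integrable_const ε)
  have hO : Integrable (fun ω => (Z ω - (Y 0 ω + ε))⁺) μ := (hZ.sub hc).pos_part
  have hI : Integrable (E.indicator fun _ => ε + δ) μ := (integrable_const _).indicator hE
  have hEZ : ∫ ω, Z ω ∂μ = ∫ ω, Y 0 ω ∂μ := by
    rw [integral_congr_ae (hY.stoppedValue_firstRise_ae_eq_condExp ε n), integral_condExp,
      ← setIntegral_univ, ← hY.setIntegral_eq n.zero_le MeasurableSet.univ, setIntegral_univ]
  have hbound : ∀ ω, Z ω ≤ Y 0 ω + ε + (Z ω - (Y 0 ω + ε))⁺ - E.indicator (fun _ => ε + δ) ω := by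
    intro ω
    by_cases hω : ω ∈ E
    · rw [indicator_of_mem hω, show Z ω = Y n ω from stoppedValue_firstRise_of_forall_lt hω.1]
      linarith [hω.2, posPart_nonneg (Y n ω - (Y 0 ω + ε))]
    · rw [indicator_of_notMem hω]
      linarith [le_posPart (Z ω - (Y 0 ω + ε))]
  have := integral_mono (g := fun ω =>
      Y 0 ω + ε + (Z ω - (Y 0 ω + ε))⁺ - E.indicator (fun _ => ε + δ) ω) hZ ((hc.add hO).sub hI)
    hbound
  rw [hEZ, integral_sub, integral_add, integral_add, integral_indicator_const _ hE,
    integral_const, smul_eq_mul, smul_eq_mul] at this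
  · linarith
  exacts [hY.integrable 0, integrable_const ε, hc, hO, hc.add hO, hI]

variable {ℱ : Filtration ℝ m0} {X : ℝ → Ω → ℝ} {s t : ℝ}

theorem Martingale.tendsto_integral_riseOvershoot_gridTime (hX : Martingale X ℱ μ)
    (hc : ∀ᵐ ω ∂μ, ContinuousOn (X · ω) (Icc s t)) (hst : s ≤ t) (hε : 0 ≤ ε) :
    Tendsto (fun m => ∫ ω, riseOvershoot (fun i => X (gridTime s t m i)) ε (2 ^ m) ω ∂μ) atTop
      (𝓝 0) := by
  simp only [riseOvershoot, gridTime_zero]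
  set Y : ℕ → ℕ → Ω → ℝ := fun m i => X (gridTime s t m i)
  have hY m : Martingale (Y m) (ℱ.comp (monotone_gridTime hst)) μ := hX.comp _
  set Z := fun m => stoppedValue (Y m) (firstRise (Y m) ε (2 ^ m))
  have hZ m := (hY m).stoppedValue_firstRise_ae_eq_condExp ε (2 ^ m)
  simp only [Y, gridTime_two_pow] at hZ
  have hc_int : Integrable (fun ω => X s ω + ε) μ := (hX.integrable s).add (integrable_const ε)
  have hO_int m : Integrable (fun ω => (Z m ω - (X s ω + ε))⁺) μ :=
    ((integrable_condExp.congr (hZ m).symm).sub hc_int).pos_part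
  have hUI : UnifIntegrable (fun m ω => (Z m ω - (X s ω + ε))⁺) 1 μ := by
    have hZ_UI := ((hX.integrable t).uniformIntegrable_condExp fun m =>
      ((hY m).stronglyAdapted.adapted.isStoppingTime_firstRise ε (2 ^ m)).measurableSpace_le_of_le
        (firstRise_le _ ε _)).ae_eq fun m => (hZ m).symm
    refine (hZ_UI.unifIntegrable.sub (unifIntegrable_const le_rfl ENNReal.one_ne_top
      (memLp_one_iff_integrable.2 hc_int)) le_rfl (fun m => hZ_UI.aestronglyMeasurable m)
      (fun _ => hc_int.aestronglyMeasurable)).of_norm_le fun m ω => ?_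
    simp only [Pi.sub_apply, Real.norm_eq_abs, abs_of_nonneg (posPart_nonneg _)]
    exact sup_le (le_abs_self _) (abs_nonneg _)
  have hlim : ∀ᵐ ω ∂μ, Tendsto (fun m => (Z m ω - (X s ω + ε))⁺) atTop (𝓝 0) := by
    filter_upwards [hc] with ω hω
    refine tendsto_order.2
      ⟨fun a ha => Eventually.of_forall fun m => ha.trans_le (posPart_nonneg _), fun a ha => ?_⟩
    filter_upwards [hω.eventually_gridTime_succ_sub_le hst (half_pos ha)] with m hm
    have := stoppedValue_firstRise_le hε (half_pos ha).le (Y := Y m) hm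
    simp only [Y, gridTime_zero] at this
    rw [posPart_lt]
    exact ⟨by linarith, ha⟩
  have := tendsto_Lp_finite_of_tendsto_ae le_rfl ENNReal.one_ne_top
    (fun m => (hO_int m).aestronglyMeasurable) MemLp.zero hUI (by simpa using hlim)
  simpa using tendsto_integral_of_L1' 0 aestronglyMeasurable_const
    (Eventually.of_forall hO_int) this

theorem Martingale.measure_forall_le_and_le_sub_eq_zero (hX : Martingale X ℱ μ)
    (hc : ∀ᵐ ω ∂μ, ContinuousOn (X · ω) (Icc s t)) (hst : s ≤ t) {δ : ℝ} (hδ : 0 < δ) :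
    μ {ω | (∀ v ∈ Icc s t, X v ω ≤ X s ω) ∧ X t ω ≤ X s ω - δ} = 0 := by
  set A := {ω | (∀ v ∈ Icc s t, X v ω ≤ X s ω) ∧ X t ω ≤ X s ω - δ}
  have hbound : ∀ ε > 0, δ * μ.real A ≤ ε * μ.real univ := by
    intro ε hε
    have hA m : (ε + δ) * μ.real A ≤
        ε * μ.real univ + ∫ ω, riseOvershoot (fun i => X (gridTime s t m i)) ε (2 ^ m) ω ∂μ := by
      have hE :=
        (hX.comp (monotone_gridTime (m := m) hst)).measureReal_noRise_and_fall_le ε δ (2 ^ m)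
      simp only [gridTime_zero, gridTime_two_pow, ofPred_and] at hE
      have hAE : A ⊆ {ω | (∀ i ≤ 2 ^ m, X (gridTime s t m i) ω - X s ω < ε) ∧
          X t ω ≤ X s ω - δ} := fun ω hω =>
        ⟨fun i hi => by linarith [hω.1 _ (gridTime_mem_Icc hst hi)], hω.2⟩
      exact le_trans (mul_le_mul_of_nonneg_left (measureReal_mono hAE) (by positivity)) hE
    have := le_of_tendsto_of_tendsto' tendsto_const_nhds
      (tendsto_const_nhds.add (hX.tendsto_integral_riseOvershoot_gridTime hc hst hε.le)) hA
    rw [add_zero] at this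
    nlinarith [measureReal_nonneg (μ := μ) (s := A)]
  have hlim : Tendsto (fun ε => ε * μ.real univ) (𝓝[>] 0) (𝓝 0) := by
    simpa using ((continuous_mul_const (μ.real univ)).tendsto 0).mono_left nhdsWithin_le_nhds
  have : δ * μ.real A ≤ 0 := ge_of_tendsto hlim (eventually_nhdsWithin_of_forall hbound)
  rw [← measureReal_eq_zero_iff]
  exact le_antisymm (nonpos_of_mul_nonpos_right this hδ) measureReal_nonneg

theorem Martingale.ae_eq_of_forall_le (hX : Martingale X ℱ μ)
    (hc : ∀ᵐ ω ∂μ, ContinuousOn (X · ω) (Icc s t)) (hst : s ≤ t) :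
    ∀ᵐ ω ∂μ, (∀ v ∈ Icc s t, X v ω ≤ X s ω) → X t ω = X s ω := by
  have hnull (k : ℕ) := measure_eq_zero_iff_ae_notMem.1
    (hX.measure_forall_le_and_le_sub_eq_zero hc hst (Nat.one_div_pos_of_nat (n := k)))
  filter_upwards [ae_all_iff.2 hnull] with ω hω hle
  refine le_antisymm (hle t ⟨hst, le_rfl⟩) (not_lt.1 fun hlt => ?_)
  obtain ⟨k, hk⟩ := exists_nat_one_div_lt (sub_pos.2 hlt)
  exact hω k ⟨hle, by linarith⟩

variable {M : ℝ → Ω → ℝ} {τ : ℕ → Ω → ℝ}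

theorem ae_eq_of_forall_le_of_localizing
    (hτ : ∀ᵐ ω ∂μ, Tendsto (fun n => τ n ω) atTop atTop)
    (hmart : ∀ n, Martingale (stoppedProcess M (fun ω => ((τ n ω : ℝ) : WithTop ℝ))) ℱ μ)
    (hc : ∀ᵐ ω ∂μ, Continuous (M · ω)) (hst : s ≤ t) :
    ∀ᵐ ω ∂μ, (∀ v ∈ Icc s t, M v ω ≤ M s ω) → M t ω = M s ω := by
  have hstop n v ω : stoppedProcess M (fun ω => ((τ n ω : ℝ) : WithTop ℝ)) v ω =
      M (min v (τ n ω)) ω := by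
    simp only [stoppedProcess, ← WithTop.coe_min]
    rfl
  have hstop_c n : ∀ᵐ ω ∂μ,
      ContinuousOn (stoppedProcess M (fun ω => ((τ n ω : ℝ) : WithTop ℝ)) · ω) (Icc s t) := by
    filter_upwards [hc] with ω hω
    simp only [hstop]
    exact (hω.comp (continuous_id.min continuous_const)).continuousOn
  filter_upwards [hτ, ae_all_iff.2 fun n => (hmart n).ae_eq_of_forall_le (hstop_c n) hst]
    with ω hτω hω hle
  obtain ⟨n, hn⟩ := (hτω.eventually_ge_atTop t).exists
  have hagree : ∀ v ≤ t, stoppedProcess M (fun ω => ((τ n ω : ℝ) : WithTop ℝ)) v ω = M v ω :=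
    fun v hv => by rw [hstop, min_eq_left (hv.trans hn)]
  have := hω n fun v hv => by simpa only [hagree v hv.2, hagree s hst] using hle v hv
  rwa [hagree t le_rfl, hagree s hst] at this

theorem measure_antitoneOn_Ici_eq_zero
    (hτ : ∀ᵐ ω ∂μ, Tendsto (fun n => τ n ω) atTop atTop)
    (hmart : ∀ n, Martingale (stoppedProcess M (fun ω => ((τ n ω : ℝ) : WithTop ℝ))) ℱ μ)
    (hc : ∀ᵐ ω ∂μ, Continuous (M · ω)) (hconst : μ {ω | ∀ t, s ≤ t → M t ω = M s ω} = 0) :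
    μ {ω | AntitoneOn (M · ω) (Ici s)} = 0 := by
  have hsk (k : ℕ) : s ≤ s + k := le_add_of_nonneg_right k.cast_nonneg
  rw [measure_eq_zero_iff_ae_notMem] at hconst ⊢
  filter_upwards [hconst, ae_all_iff.2 fun k =>
    ae_eq_of_forall_le_of_localizing hτ hmart hc (hsk k)] with ω hω hk hanti
  refine hω fun t hst => le_antisymm (hanti self_mem_Ici hst hst) ?_
  obtain ⟨k, hk'⟩ := exists_nat_ge (t - s)
  calc M s ω = M (s + k) ω := (hk k fun v hv => hanti self_mem_Ici hv.1 hv.1).symm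
    _ ≤ M t ω := hanti hst (hsk k) (by linarith)

end MeasureTheory

theorem exists_strictMono_tendsto_gridTime_subset (j : ℕ → ℕ) :
    ∃ a : ℕ → ℝ, StrictMono a ∧ (∀ k, 0 ≤ a k) ∧ Tendsto a atTop atTop ∧
      ∀ k n : ℕ, k ≤ n → gridTime n (n + 1) (j n) '' Iic (2 ^ j n) ⊆ a '' Ici k := by
  obtain ⟨a, ha, hval⟩ := exists_strictMono_concat (c := fun n => 2 ^ j n) (fun n => by positivity)
    (x := fun n r => gridTime n (n + 1) (j n) r)
    (fun n r _ => strictMono_gridTime (lt_add_one _) r.lt_succ_self) (fun n => by simp)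
  have hstart n : a (∑ m ∈ Finset.range n, 2 ^ j m) = n := by simpa using hval n 0 (Nat.zero_le _)
  have hstart_ge n : n ≤ ∑ m ∈ Finset.range n, 2 ^ j m := by
    simpa using Finset.card_nsmul_le_sum (Finset.range n) _ 1 fun m _ => Nat.one_le_two_pow
  refine ⟨a, ha, fun k => by simpa using (hstart 0).symm.trans_le (ha.monotone k.zero_le),
    tendsto_atTop_atTop.2 fun b => ⟨_, fun i hi =>
      (Nat.le_ceil b).trans ((hstart ⌈b⌉₊).symm.trans_le (ha.monotone hi))⟩, ?_⟩
  rintro k n hkn _ ⟨r, hr, rfl⟩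
  exact ⟨_, le_add_right (hkn.trans (hstart_ge n)), hval n r hr⟩

theorem exists_seq_not_eventually_decreasing_general
    {Ω : Type*} {m0 : MeasurableSpace Ω} {P : Measure Ω} [IsProbabilityMeasure P]
    {ℱ : Filtration ℝ m0} {M : ℝ → Ω → ℝ}
    (hadapted : Adapted ℱ M)
    (hcont : ∀ᵐ ω ∂P, Continuous (fun t => M t ω))
    (hloc : ∃ τ : ℕ → Ω → ℝ,
      (∀ n, IsStoppingTime ℱ (fun ω => ((τ n ω : ℝ) : WithTop ℝ))) ∧
      (∀ᵐ ω ∂P, Tendsto (fun n => τ n ω) atTop atTop) ∧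
      (∀ n, Martingale (MeasureTheory.stoppedProcess M (fun ω => ((τ n ω : ℝ) : WithTop ℝ))) ℱ P))
    (hnconst : ∀ s : ℝ, 0 ≤ s → P {ω | ∀ t : ℝ, s ≤ t → M t ω = M s ω} = 0) :
    ∃ a : ℕ → ℝ, StrictMono a ∧ (∀ k, 0 ≤ a k) ∧ Tendsto a atTop atTop ∧
      ∀ k : ℕ, P {ω | ∀ j : ℕ, k ≤ j → M (a (j + 1)) ω ≤ M (a j) ω} = 0 := by
  obtain ⟨τ, -, hτ, hmart⟩ := hloc
  have hnull (N : ℕ) : ∀ᵐ ω ∂P, ¬AntitoneOn (M · ω) (Ici (N : ℝ)) := measure_eq_zero_iff_ae_notMem.1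
    (measure_antitoneOn_Ici_eq_zero hτ hmart hcont (hnconst N N.cast_nonneg))
  obtain ⟨j, hj⟩ := exists_ae_eventually_of_forall_mem_iInter (μ := P)
    (D := fun n j => {ω | AntitoneOn (M · ω) (gridTime n (n + 1) j '' Iic (2 ^ j))})
    (T := fun n => {ω | AntitoneOn (M · ω) (Icc (n : ℝ) (n + 1))})
    (fun n j => measurableSet_setOf_antitoneOn (fun v => (hadapted v).mono (ℱ.le v) le_rfl)
      ((finite_Iic _).image _).countable)
    (fun n j j' hjj' ω hω => hω.mono (monotone_gridTime_image_Iic hjj'))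
    (by filter_upwards [hcont] with ω hω n hD using
      hω.antitoneOn_Icc_of_gridTime (lt_add_one _) hD)
  obtain ⟨a, ha, ha_nonneg, ha_top, ha_grid⟩ := exists_strictMono_tendsto_gridTime_subset j
  refine ⟨a, ha, ha_nonneg, ha_top, fun k => measure_eq_zero_iff_ae_notMem.2 ?_⟩
  filter_upwards [hj, ae_all_iff.2 hnull] with ω hjω hnullω hdec
  have hanti : AntitoneOn (M · ω) (a '' Ici k) := by
    rintro _ ⟨p, hp, rfl⟩ _ ⟨q, hq, rfl⟩ hpq
    exact antitoneOn_nat_Ici_of_succ_le (f := fun i => M (a i) ω) hdec hp hq (ha.le_iff_le.1 hpq)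
  obtain ⟨N, hN⟩ := eventually_atTop.1 hjω
  exact hnullω (max N k) (antitoneOn_Ici_of_forall_Icc_add_one fun n hn =>
    hN n (le_of_max_le_left hn) (hanti.mono (ha_grid k n (le_of_max_le_right hn))))

/-- Let `M` be a positive continuous local martingale (given via a localising
sequence of stopping times making the stopped processes martingales) whose paths a.s. never
become eventually constant. Then there is an increasing sequence `(a_k)` of nonnegative reals
tending to infinity such that for every `k` the event
`{M_{a_k} ≥ M_{a_{k+1}} ≥ ⋯}` is null. -/
theorem exists_seq_not_eventually_decreasing
    {Ω : Type*} {m0 : MeasurableSpace Ω} {P : Measure Ω} [IsProbabilityMeasure P]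
    {ℱ : Filtration ℝ m0} {M : ℝ → Ω → ℝ}
    (hadapted : Adapted ℱ M)
    (hcont : ∀ᵐ ω ∂P, Continuous (fun t => M t ω))
    (hpos : ∀ᵐ ω ∂P, ∀ t : ℝ, 0 < M t ω)
    (hloc : ∃ τ : ℕ → Ω → ℝ,
      (∀ n, IsStoppingTime ℱ (fun ω => ((τ n ω : ℝ) : WithTop ℝ))) ∧
      (∀ᵐ ω ∂P, Tendsto (fun n => τ n ω) atTop atTop) ∧
      (∀ n, Martingale (MeasureTheory.stoppedProcess M (fun ω => ((τ n ω : ℝ) : WithTop ℝ))) ℱ P))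
    (hnconst : ∀ s : ℝ, 0 ≤ s → P {ω | ∀ t : ℝ, s ≤ t → M t ω = M s ω} = 0) :
    ∃ a : ℕ → ℝ, StrictMono a ∧ (∀ k, 0 ≤ a k) ∧ Tendsto a atTop atTop ∧
      ∀ k : ℕ, P {ω | ∀ j : ℕ, k ≤ j → M (a (j + 1)) ω ≤ M (a j) ω} = 0 :=
  exists_seq_not_eventually_decreasing_general hadapted hcont hloc hnconst
end
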